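/- arXiv:math/0404457 — 6 statements merged into one kernel-verified Lean document; each statement's English description precedes it below -/
import Mathlib

section
/- Let k be a commutative ring and V a k-module. For n ≥ 1 let C^n(V,V) denote the k-module of n-multilinear maps V^n → V. For f ∈ C^p(V,V), g ∈ C^q(V,V) and 1 ≤ i ≤ p, define f∘_i g ∈ C^{p+q−1}(V,V) by (f∘_i g)(x_1,…,x_{p+q−1}) = f(x_1,…,x_{i−1}, g(x_i,…,x_{i+q−1}), x_{i+q},…,x_{p+q−1}), and set f∘g := Σ_{i=1}^{p} f∘_i g ∈ C^{p+q−1}(V,V). Then for all f ∈ C^p(V,V), g ∈ C^q(V,V), h ∈ C^r(V,V): f∘(g∘h) − (f∘g)∘h = f∘(h∘g) − (f∘h)∘g. Consequently ⊕_{n≥1} C^n(V,V) equipped with ∘ is a pre-Lie algebra over k. -/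
namespace GerstenhaberComp

variable {k V : Type*} [CommRing k] [AddCommGroup V] [Module k V]

/-- `C k V n` is the `k`-module of `n`-multilinear maps from `V` to `V`. -/
abbrev C (k V : Type*) [CommRing k] [AddCommGroup V] [Module k V] (n : ℕ) :=
  MultilinearMap k (fun _ : Fin n => V) V

/-- The tuple of arguments fed to `f` in `(f ∘ᵢ g) x`: the arguments of `x` outside the block
of `g`, with the value `v` inserted in position `i`. -/
def insertArgs {p q : ℕ} (i : Fin (p + 1)) (x : Fin (p + 1 + q) → V) (v : V) :
    Fin (p + 1) → V := fun j =>
  if h : j.1 < i.1 then x ⟨j.1, by omega⟩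
  else if j.1 = i.1 then v
  else x ⟨j.1 + q, by omega⟩

/-- The block of `q + 1` consecutive arguments of `x` starting at position `i`,
fed to `g` in `(f ∘ᵢ g) x`. -/
def gArgs {p q : ℕ} (i : Fin (p + 1)) (x : Fin (p + 1 + q) → V) : Fin (q + 1) → V :=
  fun l => x ⟨i.1 + l.1, by omega⟩

theorem gArgs_update {p q : ℕ} [DecidableEq (Fin (p + 1 + q))] (i : Fin (p + 1)) (x : Fin (p + 1 + q) → V)
    (m : Fin (p + 1 + q)) (hm : m.1 < i.1 ∨ i.1 + q < m.1) (v : V) :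
    gArgs i (Function.update x m v) = gArgs i x := by
  funext l
  have h : (⟨i.1 + l.1, by omega⟩ : Fin (p + 1 + q)) ≠ m := by
    simp only [ne_eq, Fin.ext_iff]
    omega
  simp [gArgs, Function.update_of_ne h]

theorem insertArgs_update_outside {p q : ℕ} [DecidableEq (Fin (p + 1 + q))] (i : Fin (p + 1)) (x : Fin (p + 1 + q) → V)
    (m : Fin (p + 1 + q)) (hm : m.1 < i.1 ∨ i.1 + q < m.1) (v w : V) :
    insertArgs i (Function.update x m v) w =
      Function.update (insertArgs i x w)
        ⟨if m.1 < i.1 then m.1 else m.1 - q, by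
          have h1 := m.2; have h2 := i.2; split_ifs <;> omega⟩ v := by
  funext j
  simp only [insertArgs, Function.update_apply, Fin.ext_iff]
  split_ifs <;> simp_all <;> first | omega | (congr 1; omega) | (exfalso; omega)

theorem insertArgs_update_inside {p q : ℕ} [DecidableEq (Fin (p + 1 + q))] (i : Fin (p + 1)) (x : Fin (p + 1 + q) → V)
    (m : Fin (p + 1 + q)) (hm : i.1 ≤ m.1 ∧ m.1 ≤ i.1 + q) (v w : V) :
    insertArgs i (Function.update x m v) w = insertArgs i x w := by
  funext j
  simp only [insertArgs, Function.update_apply, Fin.ext_iff]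
  split_ifs <;> simp_all <;> first | omega | (congr 1; omega) | (exfalso; omega)

theorem gArgs_update_inside {p q : ℕ} [DecidableEq (Fin (p + 1 + q))] (i : Fin (p + 1)) (x : Fin (p + 1 + q) → V)
    (m : Fin (p + 1 + q)) (hm : i.1 ≤ m.1 ∧ m.1 ≤ i.1 + q) (v : V) :
    gArgs i (Function.update x m v) =
      Function.update (gArgs i x) ⟨m.1 - i.1, by omega⟩ v := by
  funext l
  simp only [gArgs, Function.update_apply, Fin.ext_iff]
  split_ifs <;> first | rfl | (congr 1; omega) | (exfalso; omega)

theorem insertArgs_eq_update {p q : ℕ} (i : Fin (p + 1)) (x : Fin (p + 1 + q) → V) (v w : V) :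
    insertArgs i x w = Function.update (insertArgs i x v) i w := by
  funext j
  simp only [insertArgs, Function.update_apply, Fin.ext_iff]
  split_ifs <;> first | rfl | omega

/-- The composition `f ∘ᵢ g` at position `i`:
`(f ∘ᵢ g)(x_1, …, x_{p+q+1}) = f (x_1, …, x_{i-1}, g (x_i, …, x_{i+q}), x_{i+q+1}, …)`.
(Here `f` has `p + 1` arguments, `g` has `q + 1` arguments, and the result has
`p + 1 + q = (p + 1) + (q + 1) - 1` arguments.) -/
def compAt {p q : ℕ} (f : C k V (p + 1)) (g : C k V (q + 1)) (i : Fin (p + 1)) :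
    C k V (p + 1 + q) where
  toFun x := f (insertArgs i x (g (gArgs i x)))
  map_update_add' := by
    intro dec x m a b
    try dsimp only
    rcases Nat.lt_or_ge m.1 i.1 with hm | hm'
    · simp only [gArgs_update i x m (Or.inl hm), insertArgs_update_outside i x m (Or.inl hm),
        f.map_update_add]
    · rcases Nat.lt_or_ge (i.1 + q) m.1 with hm | hm
      · simp only [gArgs_update i x m (Or.inr hm), insertArgs_update_outside i x m (Or.inr hm),
          f.map_update_add]
      · have hin : i.1 ≤ m.1 ∧ m.1 ≤ i.1 + q := ⟨hm', hm⟩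
        simp only [insertArgs_update_inside i x m hin, gArgs_update_inside i x m hin,
          g.map_update_add]
        rw [insertArgs_eq_update i x
            (g (Function.update (gArgs i x) ⟨m.1 - i.1, by have := m.2; have := i.2; omega⟩ a)),
          f.map_update_add, ← insertArgs_eq_update, ← insertArgs_eq_update]
  map_update_smul' := by
    intro dec x m r a
    try dsimp only
    rcases Nat.lt_or_ge m.1 i.1 with hm | hm'
    · simp only [gArgs_update i x m (Or.inl hm), insertArgs_update_outside i x m (Or.inl hm),
        f.map_update_smul]
    · rcases Nat.lt_or_ge (i.1 + q) m.1 with hm | hm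
      · simp only [gArgs_update i x m (Or.inr hm), insertArgs_update_outside i x m (Or.inr hm),
          f.map_update_smul]
      · have hin : i.1 ≤ m.1 ∧ m.1 ≤ i.1 + q := ⟨hm', hm⟩
        simp only [insertArgs_update_inside i x m hin, gArgs_update_inside i x m hin,
          g.map_update_smul]
        rw [insertArgs_eq_update i x
            (g (Function.update (gArgs i x) ⟨m.1 - i.1, by have := m.2; have := i.2; omega⟩ a)),
          f.map_update_smul, ← insertArgs_eq_update]

/-- The Gerstenhaber circle product `f ∘ g = Σ_{i=1}^{p+1} f ∘ᵢ g`. -/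
def comp {p q : ℕ} (f : C k V (p + 1)) (g : C k V (q + 1)) : C k V (p + 1 + q) :=
  ∑ i : Fin (p + 1), compAt f g i

/-- Reindexing a multilinear map along an equality of arities. -/
def castC {m n : ℕ} (h : m = n) (f : C k V m) : C k V n :=
  f.domDomCongr (finCongr h)

end GerstenhaberComp

/-!
For an argument sequence `y`, `(f ∘ᵢ g)(y) = f (applyAt i g y)`, where `applyAt i g y` replaces
the block `yᵢ, …, y_{i+q}` by its value under `g`. Expanding `(f ∘ g) ∘ h` as a double sum over
the slot `i` of `g` in `f` and the slot `m` of `h` in `f ∘ᵢ g`, the slots `m` inside the block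
of `g` give exactly `f ∘ (g ∘ h)`, and the remaining ones give the terms where `g` and `h` sit in
two distinct slots of `f` (`parallelSum`). Since plugging into disjoint slots commutes,
`parallelSum f g h = parallelSum f h g`, and the associator `-parallelSum f g h` is symmetric
in `g` and `h`.
-/

open Finset

theorem Finset.sum_range_eq_sum_block_add_sum_erase {M : Type*} [AddCommMonoid M]
    (T : ℕ → M) {i p : ℕ} (hi : i ≤ p) (q : ℕ) :
    ∑ m ∈ range (p + q + 1), T m =
      ∑ j ∈ range (q + 1), T (i + j) +
        ∑ b ∈ (range (p + 1)).erase i, T (if b < i then b else b + q) := by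
  rw [← sum_filter_add_sum_filter_not (range (p + q + 1)) (fun m => i ≤ m ∧ m ≤ i + q)]
  congr 1
  · refine sum_nbij' (fun m => m - i) (fun j => i + j) ?_ ?_ ?_ ?_ ?_ <;> intro m hm <;>
      simp only [mem_filter, mem_range] at hm ⊢ <;> first | omega | (congr 1; omega)
  · refine sum_nbij' (fun m => if m < i then m else m - q) (fun b => if b < i then b else b + q)
      ?_ ?_ ?_ ?_ ?_ <;> intro m hm <;> simp only [mem_filter, mem_range, mem_erase] at hm ⊢ <;>
      split_ifs <;> first | omega | (congr 1 <;> omega)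

namespace GerstenhaberComp

variable {k V : Type*} [CommRing k] [AddCommGroup V] [Module k V]

/- Argument tuples are modelled as sequences `ℕ → V`, of which a map in `C k V n` reads the first
`n` entries; this keeps all the index arithmetic in `ℕ`, free of casts between `Fin` types. -/
def replaceBlock (i q : ℕ) (y : ℕ → V) (v : V) : ℕ → V := fun s =>
  if s < i then y s else if s = i then v else y (s + q)

def applyAt {q : ℕ} (i : ℕ) (g : C k V (q + 1)) (y : ℕ → V) : ℕ → V :=
  replaceBlock i q y (g fun t => y (i + t))

theorem castC_apply {m n : ℕ} (e : m = n) (F : C k V m) (y : ℕ → V) :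
    castC e F (fun l => y l) = F (fun l => y l) := rfl

theorem comp_apply {p q : ℕ} (f : C k V (p + 1)) (g : C k V (q + 1)) (y : ℕ → V) :
    comp f g (fun l => y l) = ∑ i ∈ range (p + 1), f (fun l => applyAt i g y l) := by
  rw [comp, _root_.sum_apply]
  exact Fin.sum_univ_eq_sum_range (fun i => f (fun l => applyAt i g y l)) (p + 1)

theorem map_replaceBlock_sum {n i : ℕ} (F : C k V n) (hi : i < n) (q : ℕ) (y : ℕ → V)
    {ι : Type*} (s : Finset ι) (G : ι → V) :
    F (fun l => replaceBlock i q y (∑ a ∈ s, G a) l) =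
      ∑ a ∈ s, F (fun l => replaceBlock i q y (G a) l) := by
  have hupdate : ∀ v, (fun l : Fin n => replaceBlock i q y v l) =
      Function.update (fun l : Fin n => replaceBlock i q y 0 l) ⟨i, hi⟩ v := by
    intro v
    funext l
    simp only [replaceBlock, Function.update_apply, Fin.ext_iff]
    split_ifs <;> first | rfl | omega
  rw [hupdate, MultilinearMap.map_update_sum]
  simp only [← hupdate]

theorem applyAt_applyAt_add {q r j : ℕ} (i : ℕ) (hj : j ≤ q) (g : C k V (q + 1))
    (h : C k V (r + 1)) (y : ℕ → V) :
    applyAt i g (applyAt (i + j) h y) =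
      replaceBlock i (q + r) y (g fun t => applyAt j h (fun s => y (i + s)) t) := by
  have hshift : ∀ t, applyAt (i + j) h y (i + t) = applyAt j h (fun s => y (i + s)) t := by
    intro t
    simp only [applyAt, replaceBlock, add_assoc]
    split_ifs <;> first | rfl | omega
  show replaceBlock i q _ (g fun t => applyAt (i + j) h y (i + t)) = _
  simp only [hshift]
  funext s
  simp only [applyAt, replaceBlock]
  split_ifs <;> first | rfl | omega | (congr 1; omega)

theorem applyAt_applyAt_of_lt {q r a b : ℕ} (hab : a < b) (g : C k V (q + 1))
    (h : C k V (r + 1)) (y : ℕ → V) :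
    applyAt a g (applyAt (b + q) h y) = applyAt b h (applyAt a g y) := by
  funext s
  simp only [applyAt, replaceBlock]
  split_ifs <;>
    first
    | rfl
    | omega
    | (congr 1; omega)
    | (congr 1; funext t; split_ifs <;> first | rfl | omega | (congr 1; omega))

theorem comp_castC_comp_apply {p q r : ℕ} (f : C k V (p + 1)) (g : C k V (q + 1))
    (h : C k V (r + 1)) (e : q + 1 + r = q + r + 1) (y : ℕ → V) :
    comp f (castC e (comp g h)) (fun l => y l) =
      ∑ i ∈ range (p + 1), ∑ j ∈ range (q + 1),
        f (fun l => applyAt i g (applyAt (i + j) h y) l) := by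
  rw [comp_apply]
  refine sum_congr rfl fun i hi => ?_
  have hinner : castC e (comp g h) (fun t => y (i + t)) =
      ∑ j ∈ range (q + 1), g (fun t => applyAt j h (fun s => y (i + s)) t) :=
    comp_apply g h (fun s => y (i + s))
  show f (fun l => replaceBlock i (q + r) y (castC e (comp g h) (fun t => y (i + t))) l) = _
  rw [hinner, map_replaceBlock_sum f (mem_range.mp hi)]
  refine sum_congr rfl fun j hj => ?_
  rw [applyAt_applyAt_add i (Nat.lt_succ_iff.mp (mem_range.mp hj))]

theorem applyAt_applyAt_comm {q r a b : ℕ} (hab : a ≠ b) (g : C k V (q + 1))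
    (h : C k V (r + 1)) (y : ℕ → V) :
    applyAt a g (applyAt (if b < a then b else b + q) h y) =
      applyAt b h (applyAt (if a < b then a else a + r) g y) := by
  rcases hab.lt_or_gt with hab | hab <;>
    simp only [hab, hab.not_gt, if_true, if_false, applyAt_applyAt_of_lt]

/- `g` sits in slot `a` and `h` in slot `b` of `f`; in `f ∘ₐ g` the slot `b` has become
`if b < a then b else b + q`. -/
def parallelSum {p q r : ℕ} (f : C k V (p + 1)) (g : C k V (q + 1)) (h : C k V (r + 1))
    (y : ℕ → V) : V :=
  ∑ a ∈ range (p + 1), ∑ b ∈ (range (p + 1)).erase a,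
    f (fun l => applyAt a g (applyAt (if b < a then b else b + q) h y) l)

theorem parallelSum_comm {p q r : ℕ} (f : C k V (p + 1)) (g : C k V (q + 1))
    (h : C k V (r + 1)) (y : ℕ → V) :
    parallelSum f g h y = parallelSum f h g y := by
  unfold parallelSum
  calc _ = ∑ a ∈ range (p + 1), ∑ b ∈ (range (p + 1)).erase a,
        f (fun l => applyAt b h (applyAt (if a < b then a else a + r) g y) l) :=
        sum_congr rfl fun a _ => sum_congr rfl fun b hb => by
          rw [applyAt_applyAt_comm (ne_of_mem_erase hb).symm]
    _ = _ := sum_comm' fun a b => by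
        simp only [mem_erase, mem_range]
        omega

theorem castC_comp_comp_apply {p q r : ℕ} (f : C k V (p + 1)) (g : C k V (q + 1))
    (h : C k V (r + 1)) (e : p + 1 + q = p + q + 1) (e' : q + 1 + r = q + r + 1) (y : ℕ → V) :
    comp (castC e (comp f g)) h (fun l => y l) =
      comp f (castC e' (comp g h)) (fun l => y l) + parallelSum f g h y := by
  rw [comp_castC_comp_apply, parallelSum, ← sum_add_distrib, comp_apply]
  simp only [castC_apply, comp_apply]
  rw [sum_comm]
  refine sum_congr rfl fun i hi => ?_
  exact sum_range_eq_sum_block_add_sum_erase _ (Nat.lt_succ_iff.mp (mem_range.mp hi)) q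

end GerstenhaberComp

open GerstenhaberComp in
/-- Let `k` be a commutative ring and `V` a `k`-module.  For multilinear maps
`f ∈ C^{p+1}(V,V)`, `g ∈ C^{q+1}(V,V)`, `h ∈ C^{r+1}(V,V)`, with
`f ∘ g := Σᵢ f ∘ᵢ g` the (non-associative) circle product, the associator of `∘` is
symmetric in the last two variables: `f∘(g∘h) − (f∘g)∘h = f∘(h∘g) − (f∘h)∘g`
(all four terms reindexed to live in `C^{p+q+r+1}(V,V)`).
Consequently `⊕_{n ≥ 1} C^n(V,V)` equipped with `∘` is a pre-Lie algebra over `k`. -/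
theorem multilinear_comp_preLie
    (k V : Type*) [CommRing k] [AddCommGroup V] [Module k V]
    (p q r : ℕ) (f : C k V (p + 1)) (g : C k V (q + 1)) (h : C k V (r + 1)) :
    castC (by omega) (comp f (castC (by omega : q + 1 + r = q + r + 1) (comp g h)))
        - castC (by omega : p + q + 1 + r = p + q + r + 1)
            (comp (castC (by omega : p + 1 + q = p + q + 1) (comp f g)) h)
      = castC (by omega) (comp f (castC (by omega : r + 1 + q = r + q + 1) (comp h g)))
        - castC (by omega : p + r + 1 + q = p + q + r + 1)
            (comp (castC (by omega : p + 1 + r = p + r + 1) (comp f h)) g) := by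
  ext x
  obtain ⟨y, rfl⟩ : ∃ y : ℕ → V, x = fun l : Fin _ => y l :=
    ⟨fun n => if hn : n < p + q + r + 1 then x ⟨n, hn⟩ else 0, funext fun l => by simp [l.is_le]⟩
  simp only [sub_apply, castC_apply]
  rw [castC_comp_comp_apply f g h _ (by omega), castC_comp_comp_apply f h g _ (by omega),
    parallelSum_comm]
  abel
end

section
/- Let k be a commutative ring, (L,∘) a pre-Lie algebra over k, and c : L → List L → L the inductively defined extension. Then for every T ∈ L, c T is a symmetric function of the list entries: for every list A = [X_1,…,X_n] of elements of L and every permutation σ of {1,…,n}, c T [X_1,…,X_n] = c T [X_{σ(1)},…,X_{σ(n)}]. -/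
/-!
The recursion expresses `c T [X_1, …, X_n, X]` through `c T` on lists of length `n` only, so by
induction on the length it is symmetric in `X_1, …, X_n`; it remains to swap the last two entries.
Expanding the recursion twice for `c T [X_1, …, X_n, y, x]`, the terms in which `x` and `y` act on
two different entries are symmetric in `x, y`, and the others pair up through the pre-Lie identity
applied to `(c T [X_1, …, X_n], y, x)` and to each `(X_i, y, x)`. The second pairing needs `c T` to
be additive in each entry, which follows from the bilinearity of `∘` by the same induction.
-/

namespace PreLieExt

variable {L : Type*} [AddCommGroup L]

/-- Auxiliary version of the extension `c`, processing the list from the head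
(i.e. taking the list in reversed order):
`cRev T [] = T` and
`cRev T (X :: R) = (cRev T R) ∘ X - Σᵢ cRev T (R with its i-th entry Y replaced by Y ∘ X)`. -/
def cRev (circ : L → L → L) : L → List L → L
  | T, [] => T
  | T, X :: R =>
      circ (cRev circ T R) X -
        (((List.finRange R.length).map fun i => R.set i.1 (circ (R.get i) X)).attach.map
          fun l => cRev circ T l.1).sum
  termination_by T R => R.length
  decreasing_by
  · simp
  · obtain ⟨i, -, h⟩ := List.mem_map.mp l.2
    rw [← h]
    simp

/-- The inductively defined extension `c : L → List L → L` of a binary product `∘` on `L`: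
`c T [] = T`, and
`c T (A ++ [X]) = (c T A) ∘ X - Σ_{i=1}^{n} c T [X_1, …, X_{i-1}, X_i ∘ X, X_{i+1}, …, X_n]`
for `A = [X_1, …, X_n]`.  (This is the operation `T ∘ X_1 ⋯ X_n` of the paper; it is
implemented by recursion on the reversed list.) -/
def c (circ : L → L → L) (T : L) (A : List L) : L :=
  cRev circ T A.reverse

end PreLieExt

theorem LinearMap.map_list_sum₂ {k ι M N P : Type*} [CommSemiring k] [AddCommMonoid M]
    [AddCommMonoid N] [AddCommMonoid P] [Module k M] [Module k N] [Module k P]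
    (f : M →ₗ[k] N →ₗ[k] P) (g : ι → M) (l : List ι) (y : N) :
    f (l.map g).sum y = (l.map fun i => f (g i) y).sum := by
  simpa [List.map_map, Function.comp_def] using map_list_sum (f.flip y) (l.map g)

namespace List

variable {α : Type*}

theorem sum_map_sub {M : Type*} [AddCommGroup M] (f g : α → M) (l : List α) :
    (l.map fun i => f i - g i).sum = (l.map f).sum - (l.map g).sum := by
  simpa using Multiset.sum_map_sub (m := (l : Multiset α)) (f := f) (g := g)

/-- `R.singleUpdates φ` lists the `R.length` lists obtained from `R` by applying `φ` to exactly
one entry; with `φ = (· ∘ X)` it encodes the correction sum in the recursion defining `c`. -/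
def singleUpdates (φ : α → α) : List α → List (List α)
  | [] => []
  | a :: R => (φ a :: R) :: (singleUpdates φ R).map (a :: ·)

@[simp]
theorem singleUpdates_nil (φ : α → α) : singleUpdates φ [] = [] := rfl

@[simp]
theorem singleUpdates_cons (φ : α → α) (a : α) (R : List α) :
    singleUpdates φ (a :: R) = (φ a :: R) :: (singleUpdates φ R).map (a :: ·) := rfl

theorem length_eq_of_mem_singleUpdates {φ : α → α} {R m : List α} (h : m ∈ R.singleUpdates φ) :
    m.length = R.length := by
  induction R generalizing m with
  | nil => simp at h
  | cons a R ih =>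
    simp only [singleUpdates_cons, mem_cons, mem_map] at h
    rcases h with rfl | ⟨m, hm, rfl⟩
    · rfl
    · simp [ih hm]

theorem map_finRange_set_eq_singleUpdates (φ : α → α) (R : List α) :
    (finRange R.length).map (fun i => R.set i.1 (φ (R.get i))) = R.singleUpdates φ := by
  induction R with
  | nil => simp
  | cons a R ih => simp [finRange_succ, ← ih]

end List

namespace PreLieExt

open List

variable {α M : Type*}

def PermInvariantAt (n : ℕ) (g : List α → M) : Prop :=
  ∀ l l' : List α, l.Perm l' → l.length = n → g l = g l'

def EntrywiseAdditiveAt [Add α] [Add M] (n : ℕ) (g : List α → M) : Prop :=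
  ∀ (l₁ l₂ : List α) (a b : α), l₁.length + l₂.length + 1 = n →
    g (l₁ ++ (a + b) :: l₂) = g (l₁ ++ a :: l₂) + g (l₁ ++ b :: l₂)

theorem PermInvariantAt.comp_cons {n : ℕ} {g : List α → M} (hg : PermInvariantAt (n + 1) g)
    (a : α) : PermInvariantAt n (fun l => g (a :: l)) :=
  fun l l' h hl => hg _ _ (h.cons a) (by simp [hl])

theorem EntrywiseAdditiveAt.comp_cons [Add α] [Add M] {n : ℕ} {g : List α → M}
    (hg : EntrywiseAdditiveAt (n + 1) g) (a : α) : EntrywiseAdditiveAt n (fun l => g (a :: l)) :=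
  fun l₁ l₂ b c hl => hg (a :: l₁) l₂ b c (by simp [← hl]; omega)

theorem EntrywiseAdditiveAt.map_add_cons [Add α] [Add M] {g : List α → M} {l : List α}
    (hg : EntrywiseAdditiveAt (l.length + 1) g) (a b : α) :
    g ((a + b) :: l) = g (a :: l) + g (b :: l) :=
  hg [] l a b (by simp)

theorem sum_singleUpdates_perm [AddCommMonoid M] {g : List α → M} {R R' : List α} (h : R.Perm R')
    (hg : PermInvariantAt R.length g) (φ : α → α) :
    ((R.singleUpdates φ).map g).sum = ((R'.singleUpdates φ).map g).sum := by
  induction h generalizing g with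
  | nil => rfl
  | cons a h ih =>
    simp only [singleUpdates_cons, map_cons, map_map, sum_cons]
    rw [hg _ _ (h.cons (φ a)) rfl]
    exact congrArg _ (ih (hg.comp_cons a))
  | swap x y l =>
    have htail : ∀ m ∈ l.singleUpdates φ, g (y :: x :: m) = g (x :: y :: m) :=
      fun m hm => hg _ _ (.swap x y m) (by simp [length_eq_of_mem_singleUpdates hm])
    simp only [singleUpdates_cons, map_cons, map_map, sum_cons, Function.comp_def]
    rw [hg _ _ (.swap x (φ y) l) rfl, hg _ _ (.swap (φ x) y l) rfl, map_congr_left htail]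
    abel
  | trans h₁ _ ih₁ ih₂ => exact (ih₁ hg).trans (ih₂ (h₁.length_eq ▸ hg))

theorem sum_singleUpdates_add [Add α] [AddCommMonoid M] {g : List α → M} {R : List α}
    (hg : EntrywiseAdditiveAt R.length g) (φ ψ : α → α) :
    ((R.singleUpdates fun a => φ a + ψ a).map g).sum =
      ((R.singleUpdates φ).map g).sum + ((R.singleUpdates ψ).map g).sum := by
  induction R generalizing g with
  | nil => simp
  | cons a R ih =>
    simp only [singleUpdates_cons, map_cons, map_map, sum_cons, Function.comp_def]
    rw [hg.map_add_cons, ih (hg.comp_cons a)]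
    abel

theorem sum_singleUpdates_append_cons_add [Add α] [AddCommMonoid M] {φ : α → α}
    (hφ : ∀ a b, φ (a + b) = φ a + φ b) {g : List α → M} (l₁ l₂ : List α)
    (hg : EntrywiseAdditiveAt (l₁.length + l₂.length + 1) g) (a b : α) :
    (((l₁ ++ (a + b) :: l₂).singleUpdates φ).map g).sum =
      (((l₁ ++ a :: l₂).singleUpdates φ).map g).sum +
        (((l₁ ++ b :: l₂).singleUpdates φ).map g).sum := by
  induction l₁ generalizing g with
  | nil =>
    rw [length_nil, zero_add] at hg
    have htail : ∀ m ∈ l₂.singleUpdates φ, g ((a + b) :: m) = g (a :: m) + g (b :: m) :=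
      fun m hm => hg [] m a b (by simp [length_eq_of_mem_singleUpdates hm])
    simp only [nil_append, singleUpdates_cons, map_cons, map_map, sum_cons, hφ,
      Function.comp_def, map_congr_left htail, sum_map_add]
    rw [hg.map_add_cons]
    abel
  | cons x l₁ ih =>
    rw [length_cons, Nat.add_right_comm _ 1 l₂.length] at hg
    simp only [cons_append, singleUpdates_cons, map_cons, map_map, sum_cons, Function.comp_def]
    have hhead := hg (φ x :: l₁) l₂ a b (by simp; omega)
    simp only [cons_append] at hhead
    rw [hhead, ih (hg.comp_cons x)]
    abel

/-- Applying `φ` and then `ψ` to entries either hits two distinct entries, which is symmetric in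
`φ` and `ψ`, or applies `ψ ∘ φ` to a single entry. -/
theorem sum_singleUpdates_singleUpdates_comm [AddCommGroup M] (φ ψ : α → α) (g : List α → M)
    (R : List α) :
    ((R.singleUpdates φ).map fun m => ((m.singleUpdates ψ).map g).sum).sum +
        ((R.singleUpdates (φ ∘ ψ)).map g).sum =
      ((R.singleUpdates ψ).map fun m => ((m.singleUpdates φ).map g).sum).sum +
        ((R.singleUpdates (ψ ∘ φ)).map g).sum := by
  induction R generalizing g with
  | nil => simp
  | cons a R ih =>
    have := ih (fun l => g (a :: l))
    simp only [singleUpdates_cons, map_cons, map_map, sum_cons, Function.comp_def,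
      sum_map_add] at this ⊢
    linear_combination (norm := abel) this

section Bilinear

variable {k L : Type*} [CommSemiring k] [AddCommGroup L] [Module k L]
  (circ : L →ₗ[k] L →ₗ[k] L) (T : L)

local notation "F" => cRev (fun X Y => circ X Y) T

def IsRightPreLie : Prop :=
  ∀ X Y Z : L, circ X (circ Y Z) - circ (circ X Y) Z = circ X (circ Z Y) - circ (circ X Z) Y

theorem cRev_cons (X : L) (R : List L) :
    F (X :: R) = circ (F R) X - ((R.singleUpdates (circ · X)).map F).sum := by
  rw [cRev, attach_map_val, map_finRange_set_eq_singleUpdates (circ · X)]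

theorem cRev_entrywiseAdditiveAt (n : ℕ) : EntrywiseAdditiveAt n F := by
  induction n with
  | zero => intro l₁ l₂ a b h; omega
  | succ n ih =>
    rintro (_ | ⟨X, l₁⟩) l₂ a b hn
    · obtain rfl : l₂.length = n := by simpa using hn
      simp only [nil_append, cRev_cons, map_add, sum_singleUpdates_add ih]
      abel
    · obtain rfl : l₁.length + l₂.length + 1 = n := by simp at hn; omega
      simp only [cons_append, cRev_cons, ih l₁ l₂ a b rfl, map_add, LinearMap.add_apply,
        sum_singleUpdates_append_cons_add (φ := (circ · X)) (circ.map_add₂ · · X) l₁ l₂ ih]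
      abel

theorem cRev_cons_cons (x y : L) (R : List L) :
    F (x :: y :: R) = circ (circ (F R) y) x - circ (F R) (circ y x)
      - ((R.singleUpdates (circ · y)).map fun m => circ (F m) x).sum
      - ((R.singleUpdates (circ · x)).map fun m => circ (F m) y).sum
      + ((R.singleUpdates (circ · (circ y x))).map F).sum
      + ((R.singleUpdates (circ · x)).map
          fun m => ((m.singleUpdates (circ · y)).map F).sum).sum := by
  rw [cRev_cons, cRev_cons circ T y]
  simp only [singleUpdates_cons, map_cons, sum_cons, map_map, Function.comp_def,
    cRev_cons circ T y, cRev_cons circ T (circ y x), LinearMap.map_sub₂, LinearMap.map_list_sum₂,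
    sum_map_sub]
  abel

theorem cRev_swap (hpl : IsRightPreLie circ) (x y : L) (R : List L) :
    F (x :: y :: R) = F (y :: x :: R) := by
  have hroot := hpl (F R) y x
  have hentries : ((R.singleUpdates (circ · (circ y x))).map F).sum +
        ((R.singleUpdates ((circ · y) ∘ (circ · x))).map F).sum =
      ((R.singleUpdates (circ · (circ x y))).map F).sum +
        ((R.singleUpdates ((circ · x) ∘ (circ · y))).map F).sum := by
    rw [← sum_singleUpdates_add (cRev_entrywiseAdditiveAt circ T _),
      ← sum_singleUpdates_add (cRev_entrywiseAdditiveAt circ T _)]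
    congr 3
    funext a
    exact sub_eq_sub_iff_add_eq_add.mp (hpl a y x)
  have htwice := sum_singleUpdates_singleUpdates_comm (circ · x) (circ · y) F R
  rw [cRev_cons_cons, cRev_cons_cons]
  linear_combination (norm := abel) hentries + htwice - hroot

theorem cRev_permInvariantAt (hpl : IsRightPreLie circ) (n : ℕ) : PermInvariantAt n F := by
  induction n with
  | zero =>
    intro l l' h hl
    obtain rfl := length_eq_zero_iff.mp hl
    rw [nil_perm.mp h]
  | succ n ih =>
    intro l l' h
    induction h with
    | nil => intro; rfl
    | cons x h _ =>
      intro hl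
      obtain rfl : _ = n := Nat.succ_injective hl
      rw [cRev_cons, cRev_cons, ih _ _ h rfl, sum_singleUpdates_perm h ih]
    | swap x y R => intro; exact cRev_swap circ T hpl y x R
    | trans h₁ _ ih₁ ih₂ => exact fun hl => (ih₁ hl).trans (ih₂ (h₁.length_eq ▸ hl))

end Bilinear

end PreLieExt

open PreLieExt in
/-- Let `k` be a commutative ring, `(L, ∘)` a pre-Lie algebra over `k`, and
`c : L → List L → L` the inductively defined extension.  Then for every `T ∈ L`, `c T` is a
symmetric function of the list entries: permuting the entries of the list does not change its
value. -/
theorem c_perm_invariant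
    (k L : Type*) [CommRing k] [AddCommGroup L] [Module k L]
    (circ : L →ₗ[k] L →ₗ[k] L)
    (hpl : ∀ X Y Z : L,
      circ X (circ Y Z) - circ (circ X Y) Z = circ X (circ Z Y) - circ (circ X Z) Y) :
    ∀ (T : L) (A A' : List L), A.Perm A' →
      c (fun X Y => circ X Y) T A = c (fun X Y => circ X Y) T A' := by
  intro T A A' h
  exact cRev_permInvariantAt circ T hpl _ _ _ (List.perm_reverse.mpr (A.reverse_perm.trans h)) rfl
end

section
/- Let k be a commutative ring, V a symmetric brace algebra over k, and ∘ the binary product X∘Y := X⟨Y⟩. Let c : V → List V → V be the inductively defined extension of ∘. Then the braces coincide with this extension: for all X, A_1,…,A_n ∈ V, X⟨A_1,…,A_n⟩ = c X [A_1,…,A_n]. -/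
/-- The list of arguments `A_j` for `j ∈ f⁻¹(i)`, in increasing order of `j`. -/
def fiberList {V : Type*} {m n : ℕ} (Aa : Fin m → V) (f : Fin m → Fin n) (i : Fin n) :
    List V :=
  ((List.finRange m).filter fun j => f j = i).map Aa

/-- A symmetric brace algebra over `k`: a `k`-module `V` with operations
`(X, Y_1, …, Y_n) ↦ X⟨Y_1, …, Y_n⟩` (encoded as `br : V → List V → V`), `k`-linear in each
argument, invariant under permutations of the `Y`'s, with `X⟨⟩ = X`, satisfying the symmetric
brace identity
`X⟨Y_1,…,Y_n⟩⟨A_1,…,A_m⟩ = Σ_f X⟨Y_1⟨A_{f⁻¹(1)}⟩, …, Y_n⟨A_{f⁻¹(n)}⟩, A_{f⁻¹(n+1)}⟩`,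
the sum ranging over all maps `f : {1,…,m} → {1,…,n+1}`, where the entries of `A_{f⁻¹(n+1)}`
are appended as additional separate arguments of the outer brace. -/
structure SymBrace (k V : Type*) [CommRing k] [AddCommGroup V] [Module k V] where
  br : V → List V → V
  br_nil : ∀ X : V, br X [] = X
  br_perm : ∀ (X : V) (A A' : List V), A.Perm A' → br X A = br X A'
  br_linear_left : ∀ A : List V, IsLinearMap k fun X : V => br X A
  br_linear_arg : ∀ (X : V) (A B : List V) (a b : k) (Y Z : V),
    br X (A ++ (a • Y + b • Z) :: B) = a • br X (A ++ Y :: B) + b • br X (A ++ Z :: B)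
  br_identity : ∀ (X : V) {n m : ℕ} (Y : Fin n → V) (Aa : Fin m → V),
    br (br X (List.ofFn Y)) (List.ofFn Aa) =
      ∑ f : Fin m → Fin (n + 1),
        br X ((List.ofFn fun i : Fin n =>
          br (Y i) (fiberList Aa f i.castSucc)) ++ fiberList Aa f (Fin.last n))

/-!
Taking a single outer argument (`m = 1`) in the symmetric brace identity gives
`X⟨B⟩⟨Z⟩ = X⟨B, Z⟩ + Σ_i X⟨B_1, …, B_i⟨Z⟩, …, B_n⟩`, which is precisely the recursion defining
`c`. That recursion only refers to lists of length at most that of `B ++ [Z]`, so two operations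
satisfying it with the same value on `[]` agree, by induction on the length.
-/

theorem List.reverse_set {α : Type*} (l : List α) {j : ℕ} (hj : j < l.length) (a : α) :
    (l.set j a).reverse = l.reverse.set (l.length - 1 - j) a := by
  refine List.ext_getElem (by simp) fun i hi _ => ?_
  simp only [List.length_reverse, List.length_set] at hi
  simp only [List.getElem_reverse, List.getElem_set, List.length_set]
  split_ifs <;> first | rfl | omega

theorem List.ofFn_update {α : Type*} {n : ℕ} (f : Fin n → α) (i : Fin n) (a : α) :
    List.ofFn (Function.update f i a) = (List.ofFn f).set i a := by
  refine List.ext_getElem (by simp) fun j _ _ => ?_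
  simp [List.getElem_set, Function.update_apply, Fin.ext_iff, eq_comm]

theorem fiberList_fin_one {V : Type*} {n : ℕ} (Z : V) (f : Fin 1 → Fin n) (i : Fin n) :
    fiberList (fun _ => Z) f i = if f 0 = i then [Z] else [] := by
  by_cases h : f 0 = i <;> simp [fiberList, h, List.finRange_succ]

namespace SymBrace

variable {k V : Type*} [CommRing k] [AddCommGroup V] [Module k V] (s : SymBrace k V)

theorem br_br_singleton (X Z : V) (B : List V) :
    s.br (s.br X B) [Z] =
      s.br X (B ++ [Z]) + ∑ i : Fin B.length, s.br X (B.set i (s.br B[i] [Z])) := by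
  have h := s.br_identity X B.get (fun _ : Fin 1 => Z)
  simp only [List.ofFn_get, List.ofFn_const, List.replicate_one, fiberList_fin_one] at h
  rw [h, ← (Equiv.funUnique (Fin 1) _).symm.sum_comp, Fin.sum_univ_castSucc, add_comm]
  simp only [Equiv.funUnique_symm_apply, uniqueElim_const, Fin.castSucc_inj, if_true,
    Fin.castSucc_ne_last, (Fin.castSucc_ne_last _).symm, if_false, s.br_nil, List.append_nil]
  have hset (i : Fin B.length) :
      (fun j => s.br (B.get j) (if i = j then [Z] else [])) =
        Function.update B.get i (s.br B[i] [Z]) := by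
    funext j
    by_cases hij : i = j
    · subst hij; simp
    · simp [hij, Ne.symm hij, s.br_nil]
  simp only [hset, List.ofFn_update, List.ofFn_get]

end SymBrace

namespace PreLieExt

variable {L : Type*} [AddCommGroup L] (circ : L → L → L)

theorem c_nil (T : L) : c circ T [] = T := by
  simp [c, cRev]

theorem c_concat (T : L) (B : List L) (Z : L) :
    c circ T (B ++ [Z]) =
      circ (c circ T B) Z - ∑ i : Fin B.length, c circ T (B.set i (circ B[i] Z)) := by
  rw [c, List.reverse_concat', cRev, List.attach_map_val, List.map_map, ← List.ofFn_eq_map,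
    List.sum_ofFn]
  congr 1
  refine Fintype.sum_equiv ((finCongr B.length_reverse).trans Fin.revPerm) _ _ fun i => ?_
  have hi : (i : ℕ) < B.length := i.2.trans_eq B.length_reverse
  simp only [Function.comp_apply, Equiv.trans_apply, finCongr_apply, Fin.revPerm_apply, c,
    List.get_eq_getElem]
  rw [List.reverse_set _ (Fin.is_lt _), List.getElem_reverse]
  congr 3
  · simp only [Fin.val_rev, Fin.val_cast]; omega
  · simp only [Fin.getElem_fin, Fin.val_rev, Fin.val_cast]; congr 1; omega

theorem eq_c_of_nil_of_concat (F : L → List L → L) (hnil : ∀ T, F T [] = T)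
    (hconcat : ∀ T B Z, F T (B ++ [Z]) =
      circ (F T B) Z - ∑ i : Fin B.length, F T (B.set i (circ B[i] Z)))
    (T : L) (A : List L) : F T A = c circ T A := by
  induction hA : A.length generalizing A with
  | zero => rw [List.length_eq_zero_iff.mp hA, hnil, c_nil]
  | succ n ih =>
    obtain ⟨B, Z, rfl⟩ :=
      (List.eq_nil_or_concat' A).resolve_left (List.ne_nil_of_length_eq_add_one hA)
    have hB : B.length = n := by simpa using hA
    rw [hconcat, c_concat, ih B hB]
    congr 1
    exact Finset.sum_congr rfl fun i _ => ih _ (by rw [List.length_set, hB])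

end PreLieExt

open PreLieExt in
/-- Let `k` be a commutative ring, `V` a symmetric brace algebra over `k`,
`∘` the binary product `X ∘ Y := X⟨Y⟩`, and `c : V → List V → V` the inductively defined
extension of `∘`.  Then the braces coincide with this extension:
`X⟨A_1, …, A_n⟩ = c X [A_1, …, A_n]` for all `X, A_1, …, A_n ∈ V`. -/
theorem symBrace_eq_preLie_extension
    (k V : Type*) [CommRing k] [AddCommGroup V] [Module k V] (s : SymBrace k V) :
    ∀ (X : V) (A : List V), s.br X A = c (fun a b : V => s.br a [b]) X A :=
  eq_c_of_nil_of_concat _ s.br s.br_nil fun T B Z =>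
    eq_sub_of_add_eq (s.br_br_singleton T Z B).symm
end

section
/- Let k be a commutative ring and V a k-module carrying two symmetric brace algebra structures ⟨·⟩ and ⟨·⟩'. If they induce the same binary product, i.e. X⟨Y⟩ = X⟨Y⟩' for all X, Y ∈ V, then the two structures are equal: X⟨Y_1,…,Y_n⟩ = X⟨Y_1,…,Y_n⟩' for all n and all X, Y_1,…,Y_n ∈ V. (Hence a symmetric brace algebra structure is uniquely determined by its underlying pre-Lie product, and the categories of symmetric brace algebras and of pre-Lie algebras are isomorphic.) -/
lemma fiberList_const {V : Type*} {n : ℕ} (Aa : Fin 1 → V) (j i : Fin n) :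
    fiberList Aa (fun _ => j) i = if j = i then [Aa 0] else [] := by
  simp [fiberList, List.finRange, List.filter]
  by_cases hji : j = i <;> simp [hji]

lemma brace_concat {k V : Type*} [CommRing k] [AddCommGroup V] [Module k V]
    (s : SymBrace k V) (X a : V) {n : ℕ} (Y : Fin n → V) :
    s.br X (List.ofFn Y ++ [a]) =
      s.br (s.br X (List.ofFn Y)) [a]
        - ∑ i : Fin n,
            s.br X (List.ofFn fun j => s.br (Y j) (if i = j then [a] else [])) := by
  have h2 := s.br_identity X Y (fun _ : Fin 1 => a)
  rw [show (List.ofFn fun _ : Fin 1 => a) = [a] from by simp] at h2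
  rw [Fintype.sum_equiv (Equiv.funUnique (Fin 1) (Fin (n+1)))
    _ (fun j : Fin (n+1) =>
      s.br X ((List.ofFn fun i : Fin n =>
        s.br (Y i) (fiberList (fun _ : Fin 1 => a) (fun _ => j) i.castSucc)) ++
          fiberList (fun _ : Fin 1 => a) (fun _ => j) (Fin.last n)))
    (by
      intro f
      have hf : (fun _ : Fin 1 => f 0) = f :=
        funext fun u => congrArg f (Subsingleton.elim 0 u)
      show _ = s.br X ((List.ofFn fun i : Fin n =>
        s.br (Y i) (fiberList (fun _ : Fin 1 => a) (fun _ => f 0) i.castSucc)) ++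
          fiberList (fun _ : Fin 1 => a) (fun _ => f 0) (Fin.last n))
      rw [hf])] at h2
  rw [Fin.sum_univ_castSucc] at h2
  have hne : ∀ i : Fin n, (Fin.last n = i.castSucc) = False :=
    fun i => eq_false (Fin.castSucc_lt_last i).ne'
  have hne2 : ∀ i : Fin n, (i.castSucc = Fin.last n) = False :=
    fun i => eq_false (Fin.castSucc_lt_last i).ne
  simp only [fiberList_const, hne, hne2, if_false, Fin.castSucc_inj, s.br_nil,
    List.append_nil] at h2
  rw [h2]
  abel

/-- Let `k` be a commutative ring and `V` a `k`-module carrying two symmetric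
brace algebra structures.  If they induce the same binary product, i.e. `X⟨Y⟩ = X⟨Y⟩'` for all
`X, Y ∈ V`, then the two structures are equal.  (Hence a symmetric brace algebra structure is
uniquely determined by its underlying pre-Lie product, and the categories of symmetric brace
algebras and of pre-Lie algebras are isomorphic.) -/
theorem symBrace_determined_by_binary
    (k V : Type*) [CommRing k] [AddCommGroup V] [Module k V]
    (s s' : SymBrace k V)
    (h : ∀ X Y : V, s.br X [Y] = s'.br X [Y]) :
    ∀ (X : V) (A : List V), s.br X A = s'.br X A := by
  have main : ∀ N : ℕ, ∀ A : List V, A.length ≤ N → ∀ X, s.br X A = s'.br X A := by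
    intro N
    induction N with
    | zero =>
      intro A hA X
      obtain rfl : A = [] := List.length_eq_zero_iff.mp (Nat.le_zero.mp hA)
      rw [s.br_nil, s'.br_nil]
    | succ N ih =>
      intro A hA X
      rcases A.eq_nil_or_concat with rfl | ⟨B, a, rfl⟩
      · rw [s.br_nil, s'.br_nil]
      · have hB : B.length ≤ N := by
          have := hA
          simp only [List.concat_eq_append, List.length_append, List.length_singleton] at this
          omega
        rw [List.concat_eq_append, ← List.ofFn_get B, brace_concat s, brace_concat s']
        have hlen : (List.ofFn B.get).length ≤ N := by
          rw [List.length_ofFn]; exact hB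
        congr 1
        · rw [ih _ hlen, h]
        · refine Finset.sum_congr rfl fun i _ => ?_
          have hfun : (fun j => s.br (B.get j) (if i = j then [a] else [])) =
              fun j => s'.br (B.get j) (if i = j then [a] else []) := by
            funext j
            by_cases hij : i = j
            · simp only [hij, if_pos rfl]; exact h _ _
            · simp only [if_neg hij, s.br_nil, s'.br_nil]
          rw [hfun]
          exact ih _ (by rw [List.length_ofFn]; exact hB) X
  exact fun X A => main A.length A le_rfl X
end

section
/- Let k be a commutative ring, V a brace algebra over k, and * the product on the tensor coalgebra T(V) determined by 1*B = B and (X⊗A)*B = B(1)·X{B(2)}·(A*B(3)). Then for all A, B, C ∈ T(V) and Y ∈ V: (A·Y·B)*C = (A*C(1))·Y{C(2)}·(B*C(3)), where · denotes concatenation and iterated Sweedler notation for the deconcatenation coproduct is used. -/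
open TensorProduct

/-- All decompositions of a list `A` into `j` (possibly empty) consecutive blocks. -/
def cuts {V : Type*} : ℕ → List V → List (List (List V))
  | 0, A => if A.isEmpty then [[]] else []
  | j + 1, A =>
      (List.range (A.length + 1)).flatMap
        fun i => (cuts j (A.drop i)).map fun P => A.take i :: P

/-- Given `Ys = [Y_1, …, Y_n]` and a decomposition `P = [A_1, …, A_{2n+1}]` of a list into
`2n+1` consecutive blocks, the argument list
`A_1 ++ [Y_1{A_2}] ++ A_3 ++ ⋯ ++ A_{2n-1} ++ [Y_n{A_{2n}}] ++ A_{2n+1}`. -/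
def interleave {V : Type*} (br : V → List V → V) : List V → List (List V) → List V
  | [], P => P.flatten
  | Y :: Ys, A1 :: A2 :: P => A1 ++ br Y A2 :: interleave br Ys P
  | _ :: _, _ => []

/-- A brace algebra over `k`: a `k`-module `V` with operations
`(X, Y_1, …, Y_n) ↦ X{Y_1, …, Y_n}` (encoded as `br : V → List V → V`), `k`-linear in each
argument, with `X{} = X`, satisfying the brace identity
`X{Y_1,…,Y_n}{A} = Σ X{A_1, Y_1{A_2}, A_3, Y_2{A_4}, …, A_{2n-1}, Y_n{A_{2n}}, A_{2n+1}}`,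
the sum ranging over all decompositions of `A` into `2n+1` (possibly empty) consecutive
blocks. -/
structure BraceAlg (k V : Type*) [CommRing k] [AddCommGroup V] [Module k V] where
  br : V → List V → V
  br_nil : ∀ X : V, br X [] = X
  br_linear_left : ∀ A : List V, IsLinearMap k fun X : V => br X A
  br_linear_arg : ∀ (X : V) (A B : List V) (a b : k) (Y Z : V),
    br X (A ++ (a • Y + b • Z) :: B) = a • br X (A ++ Y :: B) + b • br X (A ++ Z :: B)
  br_identity : ∀ (X : V) (Ys A : List V),
    br (br X Ys) A =
      ((cuts (2 * Ys.length + 1) A).map fun P => br X (interleave br Ys P)).sum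

/-- The trilinear assembling map `c₁ ⊗ c₂ ⊗ c₃ ↦ f c₁ * g c₂ * h c₃` on an algebra. -/
noncomputable def mix {k A : Type*} [CommRing k] [Ring A] [Algebra k A]
    (f g h : A →ₗ[k] A) : (A ⊗[k] A) ⊗[k] A →ₗ[k] A :=
  TensorProduct.lift ((LinearMap.mul k A).compl₁₂
    (TensorProduct.lift ((LinearMap.mul k A).compl₁₂ f g)) h)

section BraceAux

set_option maxHeartbeats 1000000
set_option synthInstance.maxHeartbeats 200000

namespace BraceStarAux

lemma mix_tmul {k A : Type*} [CommRing k] [Ring A] [Algebra k A]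
    (f g h : A →ₗ[k] A) (a b c : A) :
    mix f g h ((a ⊗ₜ[k] b) ⊗ₜ[k] c) = f a * g b * h c := by
  simp [mix, LinearMap.mul_apply']

lemma mix_zero_left {k A : Type*} [CommRing k] [Ring A] [Algebra k A]
    (g h : A →ₗ[k] A) : mix (0 : A →ₗ[k] A) g h = 0 := by
  apply TensorProduct.ext_threefold
  intro x y z
  simp [mix_tmul]

lemma mix_add_left {k A : Type*} [CommRing k] [Ring A] [Algebra k A]
    (f₁ f₂ g h : A →ₗ[k] A) : mix (f₁ + f₂) g h = mix f₁ g h + mix f₂ g h := by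
  apply TensorProduct.ext_threefold
  intro x y z
  simp [mix_tmul, add_mul]

lemma mix_smul_left {k A : Type*} [CommRing k] [Ring A] [Algebra k A]
    (c : k) (f g h : A →ₗ[k] A) : mix (c • f) g h = c • mix f g h := by
  apply TensorProduct.ext_threefold
  intro x y z
  simp [mix_tmul, smul_mul_assoc]

lemma span_monomial {k V : Type*} [CommRing k] [AddCommGroup V] [Module k V] :
    Submodule.span k (Set.range fun l : List V => (l.map (TensorAlgebra.ι k)).prod) = ⊤ := by
  rw [eq_top_iff]
  rintro C -
  have hmem : ∀ l : List V, (l.map (TensorAlgebra.ι k)).prod ∈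
      Submodule.span k (Set.range fun l : List V => (l.map (TensorAlgebra.ι k)).prod) :=
    fun l => Submodule.subset_span ⟨l, rfl⟩
  induction C using TensorAlgebra.induction with
  | algebraMap r =>
      have h1 : (algebraMap k (TensorAlgebra k V)) r
          = r • (([] : List V).map (TensorAlgebra.ι k)).prod := by
        simp [Algebra.algebraMap_eq_smul_one]
      rw [h1]; exact Submodule.smul_mem _ r (hmem [])
  | ι x =>
      have h1 : TensorAlgebra.ι k x = (([x] : List V).map (TensorAlgebra.ι k)).prod := by simp
      rw [h1]; exact hmem [x]
  | add a b ha hb => exact Submodule.add_mem _ ha hb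
  | mul a b ha hb =>
      induction ha using Submodule.span_induction with
      | mem u hu =>
          obtain ⟨l, rfl⟩ := hu
          induction hb using Submodule.span_induction with
          | mem w hw =>
              obtain ⟨m, rfl⟩ := hw
              have h1 : (l.map (TensorAlgebra.ι k)).prod * (m.map (TensorAlgebra.ι k)).prod
                  = ((l ++ m).map (TensorAlgebra.ι k)).prod := by
                rw [List.map_append, List.prod_append]
              rw [h1]; exact hmem _
          | zero => rw [mul_zero]; exact Submodule.zero_mem _
          | add y z _ _ hy hz => rw [mul_add]; exact Submodule.add_mem _ hy hz
          | smul c y _ hy => rw [mul_smul_comm]; exact Submodule.smul_mem _ c hy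
      | zero => rw [zero_mul]; exact Submodule.zero_mem _
      | add y z _ _ hy hz => rw [add_mul]; exact Submodule.add_mem _ hy hz
      | smul c y _ hy => rw [smul_mul_assoc]; exact Submodule.smul_mem _ c hy

lemma ext_monomial {k V : Type*} [CommRing k] [AddCommGroup V] [Module k V]
    {M : Type*} [AddCommMonoid M] [Module k M]
    {f g : TensorAlgebra k V →ₗ[k] M}
    (h : ∀ l : List V,
      f (l.map (TensorAlgebra.ι k)).prod = g (l.map (TensorAlgebra.ι k)).prod) :
    f = g :=
  LinearMap.ext_on span_monomial (by rintro _ ⟨l, rfl⟩; exact h l)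

lemma assoc_symm_nat {k : Type*} [CommRing k]
    {A B C A' B' C' : Type*}
    [AddCommGroup A] [AddCommGroup B] [AddCommGroup C]
    [AddCommGroup A'] [AddCommGroup B'] [AddCommGroup C']
    [Module k A] [Module k B] [Module k C] [Module k A'] [Module k B'] [Module k C']
    (p : A →ₗ[k] A') (q : B →ₗ[k] B') (r : C →ₗ[k] C') (u : A ⊗[k] (B ⊗[k] C)) :
    TensorProduct.map (TensorProduct.map p q) r ((TensorProduct.assoc k A B C).symm u)
      = (TensorProduct.assoc k A' B' C').symm (TensorProduct.map p (TensorProduct.map q r) u) := by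
  refine TensorProduct.induction_on u (by simp) (fun a bc => ?_)
    (fun y z hy hz => by simp only [map_add, hy, hz])
  refine TensorProduct.induction_on bc (by simp) (fun b c => by simp) (fun y z hy hz => ?_)
  simp only [TensorProduct.tmul_add, map_add, hy, hz]

lemma assoc_symm_nat' {k : Type*} [CommRing k]
    {A B C A' B' C' : Type*}
    [AddCommGroup A] [AddCommGroup B] [AddCommGroup C]
    [AddCommGroup A'] [AddCommGroup B'] [AddCommGroup C']
    [Module k A] [Module k B] [Module k C] [Module k A'] [Module k B'] [Module k C']
    (p : A →ₗ[k] A') (q : B →ₗ[k] B') (r : C →ₗ[k] C') :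
    TensorProduct.map (TensorProduct.map p q) r ∘ₗ (TensorProduct.assoc k A B C).symm.toLinearMap
      = (TensorProduct.assoc k A' B' C').symm.toLinearMap ∘ₗ
          TensorProduct.map p (TensorProduct.map q r) :=
  LinearMap.ext (assoc_symm_nat p q r)

lemma map_comp_id {k : Type*} [CommRing k] {A B C M : Type*}
    [AddCommGroup A] [AddCommGroup B] [AddCommGroup C] [AddCommGroup M]
    [Module k A] [Module k B] [Module k C] [Module k M]
    (f₂ : B →ₗ[k] C) (f₁ : A →ₗ[k] B) :
    TensorProduct.map (f₂ ∘ₗ f₁) (LinearMap.id : M →ₗ[k] M)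
      = TensorProduct.map f₂ LinearMap.id ∘ₗ TensorProduct.map f₁ LinearMap.id := by
  rw [← TensorProduct.map_comp, LinearMap.id_comp]

lemma coassoc {k V : Type*} [CommRing k] [AddCommGroup V] [Module k V]
    (Δ : TensorAlgebra k V →ₗ[k] TensorAlgebra k V ⊗[k] TensorAlgebra k V)
    (hΔone : Δ 1 = 1 ⊗ₜ 1)
    (hΔ : ∀ (x : V) (B : TensorAlgebra k V),
      Δ (TensorAlgebra.ι k x * B) =
        1 ⊗ₜ (TensorAlgebra.ι k x * B) +
          TensorProduct.map (LinearMap.mulLeft k (TensorAlgebra.ι k x)) LinearMap.id (Δ B)) :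
    TensorProduct.map Δ LinearMap.id ∘ₗ Δ =
      (TensorProduct.assoc k (TensorAlgebra k V) (TensorAlgebra k V)
        (TensorAlgebra k V)).symm.toLinearMap ∘ₗ TensorProduct.map LinearMap.id Δ ∘ₗ Δ := by
  apply ext_monomial
  intro l
  induction l with
  | nil =>
      simp [hΔone, TensorProduct.assoc_symm_tmul]
  | cons x l ih =>
      set T := TensorAlgebra k V
      set P : T := (l.map (TensorAlgebra.ι k)).prod with hP
      set Lx := LinearMap.mulLeft k (TensorAlgebra.ι k x) with hLx
      have e1 : ∀ w : T ⊗[k] T,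
          TensorProduct.map Δ LinearMap.id (TensorProduct.map Lx LinearMap.id w)
            = TensorProduct.map ((TensorProduct.mk k T T 1) ∘ₗ Lx) LinearMap.id w
              + TensorProduct.map (TensorProduct.map Lx LinearMap.id) LinearMap.id
                  (TensorProduct.map Δ LinearMap.id w) := by
        intro w
        refine TensorProduct.induction_on w (by simp) (fun p q => ?_)
          (fun y z hy hz => by simp only [map_add, hy, hz]; abel)
        simp [hLx, hΔ, TensorProduct.add_tmul]
      have e2 : ∀ w : T ⊗[k] T,
          TensorProduct.map ((TensorProduct.mk k T T 1) ∘ₗ Lx) LinearMap.id w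
            = (TensorProduct.assoc k T T T).symm
                (1 ⊗ₜ (TensorProduct.map Lx LinearMap.id w)) := by
        intro w
        refine TensorProduct.induction_on w (by simp)
          (fun p q => by simp [TensorProduct.assoc_symm_tmul])
          (fun y z hy hz => by simp only [map_add, TensorProduct.tmul_add, hy, hz])
      have e3 : ∀ u : T ⊗[k] (T ⊗[k] T),
          TensorProduct.map (TensorProduct.map Lx LinearMap.id) LinearMap.id
              ((TensorProduct.assoc k T T T).symm u)
            = (TensorProduct.assoc k T T T).symm
                (TensorProduct.map Lx LinearMap.id u) := by
        intro u
        have := assoc_symm_nat (k := k) Lx (LinearMap.id : T →ₗ[k] T)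
          (LinearMap.id : T →ₗ[k] T) u
        simpa using this
      have e4 : ∀ w : T ⊗[k] T,
          TensorProduct.map LinearMap.id Δ (TensorProduct.map Lx LinearMap.id w)
            = TensorProduct.map Lx LinearMap.id (TensorProduct.map LinearMap.id Δ w) := by
        intro w
        refine TensorProduct.induction_on w (by simp) (fun p q => by simp)
          (fun y z hy hz => by simp only [map_add, hy, hz])
      have hml : ((x :: l).map (TensorAlgebra.ι k)).prod = TensorAlgebra.ι k x * P := by
        simp [hP]
      simp only [LinearMap.comp_apply, LinearEquiv.coe_coe] at ih ⊢
      rw [hml, hΔ x P, ← hLx]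
      simp only [map_add]
      rw [e1 (Δ P), ih, e2, e4, e3]
      simp only [TensorProduct.map_tmul, hΔone, LinearMap.id_coe, id_eq, hΔ x P, ← hLx,
        TensorProduct.tmul_add, map_add, TensorProduct.assoc_symm_tmul]
      abel

lemma Dr_eq {k W : Type*} [CommRing k] [AddCommGroup W] [Module k W] (Δ : W →ₗ[k] W ⊗[k] W)
    (hco : TensorProduct.map Δ LinearMap.id ∘ₗ Δ =
      (TensorProduct.assoc k W W W).symm.toLinearMap ∘ₗ TensorProduct.map LinearMap.id Δ ∘ₗ Δ) :
    TensorProduct.map (TensorProduct.map (TensorProduct.map Δ LinearMap.id ∘ₗ Δ) LinearMap.id)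
        LinearMap.id ∘ₗ (TensorProduct.map Δ LinearMap.id ∘ₗ Δ)
      = TensorProduct.map
          (TensorProduct.assoc k (W ⊗[k] W) W W).symm.toLinearMap LinearMap.id ∘ₗ
        (TensorProduct.assoc k (W ⊗[k] W) (W ⊗[k] W) W).symm.toLinearMap ∘ₗ
        TensorProduct.map Δ (TensorProduct.map Δ LinearMap.id ∘ₗ Δ) ∘ₗ Δ := by
  have hG : TensorProduct.map (TensorProduct.map Δ LinearMap.id ∘ₗ Δ)
        (LinearMap.id : W →ₗ[k] W) ∘ₗ Δ
      = (TensorProduct.assoc k (W ⊗[k] W) W W).symm.toLinearMap ∘ₗ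
          TensorProduct.map Δ Δ ∘ₗ Δ := by
    rw [map_comp_id, LinearMap.comp_assoc, hco, ← LinearMap.comp_assoc, ← LinearMap.comp_assoc,
      assoc_symm_nat', TensorProduct.map_id, LinearMap.comp_assoc, LinearMap.comp_assoc]
    congr 1
    rw [← LinearMap.comp_assoc, ← TensorProduct.map_comp, LinearMap.comp_id, LinearMap.id_comp]
  have s1 := (map_comp_id (k := k) (A := W) (B := W ⊗[k] W)
      (C := ((W ⊗[k] W) ⊗[k] W) ⊗[k] W) (M := W)
      (TensorProduct.map (TensorProduct.map Δ LinearMap.id ∘ₗ Δ) LinearMap.id) Δ).symm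
  have s2 := map_comp_id (k := k) (A := W) (B := (W ⊗[k] W) ⊗[k] (W ⊗[k] W))
      (C := ((W ⊗[k] W) ⊗[k] W) ⊗[k] W) (M := W)
      ((TensorProduct.assoc k (W ⊗[k] W) W W).symm.toLinearMap)
      (TensorProduct.map Δ Δ ∘ₗ Δ)
  have s3 := map_comp_id (k := k) (A := W) (B := W ⊗[k] W)
      (C := (W ⊗[k] W) ⊗[k] (W ⊗[k] W)) (M := W) (TensorProduct.map Δ Δ) Δ
  calc TensorProduct.map (TensorProduct.map (TensorProduct.map Δ LinearMap.id ∘ₗ Δ) LinearMap.id)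
        LinearMap.id ∘ₗ (TensorProduct.map Δ LinearMap.id ∘ₗ Δ)
      = TensorProduct.map ((TensorProduct.map (TensorProduct.map Δ LinearMap.id ∘ₗ Δ)
          LinearMap.id) ∘ₗ Δ) LinearMap.id ∘ₗ Δ := by
        rw [← LinearMap.comp_assoc, s1]
    _ = TensorProduct.map ((TensorProduct.assoc k (W ⊗[k] W) W W).symm.toLinearMap ∘ₗ
          TensorProduct.map Δ Δ ∘ₗ Δ) LinearMap.id ∘ₗ Δ := by rw [hG]
    _ = TensorProduct.map (TensorProduct.assoc k (W ⊗[k] W) W W).symm.toLinearMap LinearMap.id ∘ₗ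
          ((TensorProduct.map (TensorProduct.map Δ Δ) LinearMap.id ∘ₗ
            TensorProduct.map Δ LinearMap.id) ∘ₗ Δ) := by
        rw [s2, s3, LinearMap.comp_assoc, LinearMap.comp_assoc]
    _ = TensorProduct.map (TensorProduct.assoc k (W ⊗[k] W) W W).symm.toLinearMap LinearMap.id ∘ₗ
          (TensorProduct.map (TensorProduct.map Δ Δ) LinearMap.id ∘ₗ
            ((TensorProduct.assoc k W W W).symm.toLinearMap ∘ₗ
              (TensorProduct.map LinearMap.id Δ ∘ₗ Δ))) := by
        rw [LinearMap.comp_assoc, hco]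
    _ = TensorProduct.map (TensorProduct.assoc k (W ⊗[k] W) W W).symm.toLinearMap LinearMap.id ∘ₗ
          (((TensorProduct.map (TensorProduct.map Δ Δ) LinearMap.id ∘ₗ
            (TensorProduct.assoc k W W W).symm.toLinearMap) ∘ₗ
              TensorProduct.map LinearMap.id Δ) ∘ₗ Δ) := by
        simp only [LinearMap.comp_assoc]
    _ = TensorProduct.map (TensorProduct.assoc k (W ⊗[k] W) W W).symm.toLinearMap LinearMap.id ∘ₗ
          ((((TensorProduct.assoc k (W ⊗[k] W) (W ⊗[k] W) W).symm.toLinearMap ∘ₗ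
            TensorProduct.map Δ (TensorProduct.map Δ LinearMap.id)) ∘ₗ
              TensorProduct.map LinearMap.id Δ) ∘ₗ Δ) := by
        rw [assoc_symm_nat']
    _ = TensorProduct.map (TensorProduct.assoc k (W ⊗[k] W) W W).symm.toLinearMap LinearMap.id ∘ₗ
        (TensorProduct.assoc k (W ⊗[k] W) (W ⊗[k] W) W).symm.toLinearMap ∘ₗ
        TensorProduct.map Δ (TensorProduct.map Δ LinearMap.id ∘ₗ Δ) ∘ₗ Δ := by
        have s4 : TensorProduct.map Δ (TensorProduct.map Δ LinearMap.id ∘ₗ Δ)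
            = TensorProduct.map Δ (TensorProduct.map Δ LinearMap.id) ∘ₗ
                TensorProduct.map LinearMap.id Δ := by
          rw [← TensorProduct.map_comp, LinearMap.comp_id]
        rw [s4]
        simp only [LinearMap.comp_assoc]

lemma mix5 {k A : Type*} [CommRing k] [Ring A] [Algebra k A]
    (p q f g h : A →ₗ[k] A) (v : (A ⊗[k] A) ⊗[k] ((A ⊗[k] A) ⊗[k] A)) :
    (LinearMap.mul' k A ∘ₗ
      TensorProduct.map (LinearMap.mul' k A ∘ₗ TensorProduct.map p q) (mix f g h)) v
      = (LinearMap.mul' k A ∘ₗ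
          TensorProduct.map (LinearMap.mul' k A ∘ₗ TensorProduct.map (mix p q f) g) h)
          (TensorProduct.map
            (TensorProduct.assoc k (A ⊗[k] A) A A).symm.toLinearMap LinearMap.id
            ((TensorProduct.assoc k (A ⊗[k] A) (A ⊗[k] A) A).symm v)) := by
  refine TensorProduct.induction_on v (by simp) (fun x y => ?_)
    (fun s t hs ht => by simp only [map_add, hs, ht])
  refine TensorProduct.induction_on x (by simp) (fun a b => ?_)
    (fun s t hs ht => by simp only [TensorProduct.add_tmul, map_add, hs, ht])
  refine TensorProduct.induction_on y (by simp) (fun z c => ?_)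
    (fun s t hs ht => by simp only [TensorProduct.tmul_add, map_add, hs, ht])
  refine TensorProduct.induction_on z (by simp) (fun d₁ d₂ => ?_)
    (fun s t hs ht => by simp only [TensorProduct.add_tmul, TensorProduct.tmul_add, map_add,
      hs, ht])
  simp [mix_tmul, LinearMap.mul'_apply, TensorProduct.assoc_symm_tmul, mul_assoc]

lemma mixL {k A : Type*} [CommRing k] [Ring A] [Algebra k A]
    (p q f g h : A →ₗ[k] A) (D : A →ₗ[k] (A ⊗[k] A) ⊗[k] A)
    (u : (A ⊗[k] A) ⊗[k] A) :
    mix p q (mix f g h ∘ₗ D) u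
      = (LinearMap.mul' k A ∘ₗ
          TensorProduct.map (LinearMap.mul' k A ∘ₗ TensorProduct.map p q) (mix f g h))
          (TensorProduct.map LinearMap.id D u) := by
  refine TensorProduct.induction_on u (by simp) (fun x c => ?_)
    (fun s t hs ht => by simp only [map_add, hs, ht])
  refine TensorProduct.induction_on x (by simp) (fun a b => ?_)
    (fun s t hs ht => by simp only [TensorProduct.add_tmul, map_add, hs, ht])
  simp [mix_tmul, LinearMap.mul'_apply]

lemma mixR {k A : Type*} [CommRing k] [Ring A] [Algebra k A]
    (p q f g h : A →ₗ[k] A) (D : A →ₗ[k] (A ⊗[k] A) ⊗[k] A)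
    (u : (A ⊗[k] A) ⊗[k] A) :
    mix (mix p q f ∘ₗ D) g h u
      = (LinearMap.mul' k A ∘ₗ
          TensorProduct.map (LinearMap.mul' k A ∘ₗ TensorProduct.map (mix p q f) g) h)
          (TensorProduct.map (TensorProduct.map D LinearMap.id) LinearMap.id u) := by
  refine TensorProduct.induction_on u (by simp) (fun x c => ?_)
    (fun s t hs ht => by simp only [map_add, hs, ht])
  refine TensorProduct.induction_on x (by simp) (fun a b => ?_)
    (fun s t hs ht => by simp only [TensorProduct.add_tmul, map_add, hs, ht])
  simp [mix_tmul, LinearMap.mul'_apply]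

lemma KL {k A : Type*} [CommRing k] [Ring A] [Algebra k A]
    (Δ : A →ₗ[k] A ⊗[k] A)
    (hco : TensorProduct.map Δ LinearMap.id ∘ₗ Δ =
      (TensorProduct.assoc k A A A).symm.toLinearMap ∘ₗ TensorProduct.map LinearMap.id Δ ∘ₗ Δ)
    (p q f g h : A →ₗ[k] A) (C : A) :
    mix p q (mix f g h ∘ₗ (TensorProduct.map Δ LinearMap.id ∘ₗ Δ))
        (TensorProduct.map Δ LinearMap.id (Δ C))
      = mix (mix p q f ∘ₗ (TensorProduct.map Δ LinearMap.id ∘ₗ Δ)) g h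
        (TensorProduct.map Δ LinearMap.id (Δ C)) := by
  have hDl : TensorProduct.map (LinearMap.id : A ⊗[k] A →ₗ[k] A ⊗[k] A)
        (TensorProduct.map Δ LinearMap.id ∘ₗ Δ) ∘ₗ (TensorProduct.map Δ LinearMap.id ∘ₗ Δ)
      = TensorProduct.map Δ (TensorProduct.map Δ LinearMap.id ∘ₗ Δ) ∘ₗ Δ := by
    rw [← LinearMap.comp_assoc, ← TensorProduct.map_comp, LinearMap.id_comp, LinearMap.comp_id]
  have h1 : TensorProduct.map (LinearMap.id : A ⊗[k] A →ₗ[k] A ⊗[k] A)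
        (TensorProduct.map Δ LinearMap.id ∘ₗ Δ) (TensorProduct.map Δ LinearMap.id (Δ C))
      = TensorProduct.map Δ (TensorProduct.map Δ LinearMap.id ∘ₗ Δ) (Δ C) := by
    have := LinearMap.congr_fun hDl C
    simpa only [LinearMap.comp_apply] using this
  have h2 : TensorProduct.map
        (TensorProduct.map (TensorProduct.map Δ LinearMap.id ∘ₗ Δ) LinearMap.id) LinearMap.id
        (TensorProduct.map Δ LinearMap.id (Δ C))
      = TensorProduct.map
          (TensorProduct.assoc k (A ⊗[k] A) A A).symm.toLinearMap LinearMap.id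
          ((TensorProduct.assoc k (A ⊗[k] A) (A ⊗[k] A) A).symm
            (TensorProduct.map Δ (TensorProduct.map Δ LinearMap.id ∘ₗ Δ) (Δ C))) := by
    have := LinearMap.congr_fun (Dr_eq Δ hco) C
    simpa only [LinearMap.comp_apply, LinearEquiv.coe_coe] using this
  rw [mixL, mixR, h1, h2]
  exact mix5 p q f g h (TensorProduct.map Δ (TensorProduct.map Δ LinearMap.id ∘ₗ Δ) (Δ C))

end BraceStarAux

end BraceAux

/-- Let `k` be a commutative ring, `V` a brace algebra over `k`, and `*` the
product on the tensor coalgebra `T(V)` determined by `1 * B = B` and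
`(X⊗A) * B = B⁽¹⁾·X{B⁽²⁾}·(A*B⁽³⁾)`.  Then for all `A, B, C ∈ T(V)` and `Y ∈ V`:
`(A·Y·B) * C = (A*C⁽¹⁾)·Y{C⁽²⁾}·(B*C⁽³⁾)` (iterated Sweedler notation for the
deconcatenation coproduct). -/
theorem brace_star_concat_formula
    (k V : Type*) [CommRing k] [AddCommGroup V] [Module k V]
    (b : BraceAlg k V)
    -- the deconcatenation coproduct on the tensor coalgebra `T(V)`
    (Δ : TensorAlgebra k V →ₗ[k] TensorAlgebra k V ⊗[k] TensorAlgebra k V)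
    (hΔone : Δ 1 = 1 ⊗ₜ 1)
    (hΔ : ∀ (x : V) (B : TensorAlgebra k V),
      Δ (TensorAlgebra.ι k x * B) =
        1 ⊗ₜ (TensorAlgebra.ι k x * B) +
          TensorProduct.map (LinearMap.mulLeft k (TensorAlgebra.ι k x)) LinearMap.id (Δ B))
    -- the counit: projection onto `V^{⊗0} = k`
    (ε : TensorAlgebra k V →ₗ[k] k)
    (hεone : ε 1 = 1)
    (hε : ∀ (x : V) (B : TensorAlgebra k V), ε (TensorAlgebra.ι k x * B) = 0)
    -- the `k`-linear extension of the braces to `V ⊗ T(V) → V`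
    (Br : V → TensorAlgebra k V →ₗ[k] V)
    (hBrleft : ∀ B : TensorAlgebra k V, IsLinearMap k fun X : V => Br X B)
    (hBr : ∀ (X : V) (l : List V),
      Br X ((l.map (TensorAlgebra.ι k)).prod) = b.br X l)
    (star : TensorAlgebra k V →ₗ[k] TensorAlgebra k V →ₗ[k] TensorAlgebra k V)
    (hstarone : ∀ B, star 1 B = B)
    (hstar : ∀ (x : V) (A B : TensorAlgebra k V),
      star (TensorAlgebra.ι k x * A) B =
        mix LinearMap.id (TensorAlgebra.ι k ∘ₗ Br x) (star A)
          ((TensorProduct.map Δ LinearMap.id) (Δ B))) :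
    ∀ (A B C : TensorAlgebra k V) (Y : V),
      star (A * TensorAlgebra.ι k Y * B) C =
        mix (star A) (TensorAlgebra.ι k ∘ₗ Br Y) (star B)
          ((TensorProduct.map Δ LinearMap.id) (Δ C)) := by
  intro A B C Y
  have hco := BraceStarAux.coassoc Δ hΔone hΔ
  have hstar1 : star (1 : TensorAlgebra k V) = LinearMap.id := LinearMap.ext hstarone
  have hstarmap : ∀ (x : V) (A' : TensorAlgebra k V),
      star (TensorAlgebra.ι k x * A') =
        mix LinearMap.id (TensorAlgebra.ι k ∘ₗ Br x) (star A') ∘ₗ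
          (TensorProduct.map Δ LinearMap.id ∘ₗ Δ) := fun x A' =>
    LinearMap.ext fun C' => by
      simpa only [LinearMap.comp_apply] using hstar x A' C'
  have hmono : ∀ (l : List V) (C' : TensorAlgebra k V),
      star ((l.map (TensorAlgebra.ι k)).prod * TensorAlgebra.ι k Y * B) C' =
        mix (star ((l.map (TensorAlgebra.ι k)).prod)) (TensorAlgebra.ι k ∘ₗ Br Y) (star B)
          ((TensorProduct.map Δ LinearMap.id) (Δ C')) := by
    intro l
    induction l with
    | nil =>
        intro C'
        simp only [List.map_nil, List.prod_nil, one_mul]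
        rw [hstar Y B C', hstar1]
    | cons x l ih =>
        intro C'
        have hprod : ((x :: l).map (TensorAlgebra.ι k)).prod
            = TensorAlgebra.ι k x * (l.map (TensorAlgebra.ι k)).prod := by simp
        rw [hprod, mul_assoc (TensorAlgebra.ι k x) ((l.map (TensorAlgebra.ι k)).prod)
            (TensorAlgebra.ι k Y),
          mul_assoc (TensorAlgebra.ι k x)
            ((l.map (TensorAlgebra.ι k)).prod * TensorAlgebra.ι k Y) B,
          hstar x ((l.map (TensorAlgebra.ι k)).prod * TensorAlgebra.ι k Y * B) C']
        have hstarP : star ((l.map (TensorAlgebra.ι k)).prod * TensorAlgebra.ι k Y * B)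
            = mix (star ((l.map (TensorAlgebra.ι k)).prod)) (TensorAlgebra.ι k ∘ₗ Br Y)
                (star B) ∘ₗ (TensorProduct.map Δ LinearMap.id ∘ₗ Δ) :=
          LinearMap.ext fun C'' => by
            simpa only [LinearMap.comp_apply] using ih C''
        rw [hstarP, hstarmap x ((l.map (TensorAlgebra.ι k)).prod)]
        exact BraceStarAux.KL Δ hco LinearMap.id (TensorAlgebra.ι k ∘ₗ Br x)
          (star ((l.map (TensorAlgebra.ι k)).prod)) (TensorAlgebra.ι k ∘ₗ Br Y) (star B) C'
  have hA : A ∈ Submodule.span k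
      (Set.range fun l : List V => (l.map (TensorAlgebra.ι k)).prod) := by
    rw [BraceStarAux.span_monomial]; exact Submodule.mem_top
  induction hA using Submodule.span_induction with
  | mem a ha =>
      obtain ⟨l, rfl⟩ := ha
      exact hmono l C
  | zero =>
      simp only [zero_mul, map_zero, LinearMap.zero_apply, BraceStarAux.mix_zero_left]
  | add a₁ a₂ _ _ h₁ h₂ =>
      simp only [add_mul, map_add, LinearMap.add_apply, BraceStarAux.mix_add_left, h₁, h₂]
  | smul c a _ h₁ =>
      simp only [smul_mul_assoc, map_smul, LinearMap.smul_apply, BraceStarAux.mix_smul_left,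
        h₁]
end

section
/- Let k be a commutative ring and X a type. There is a unique brace algebra structure on BR(X), the free k-module on the set of X-colored planar rooted trees, such that for every x ∈ X and all X-colored planar rooted trees T_1,…,T_n: •_x{T_1,…,T_n} = node x [T_1,…,T_n] (the tree obtained by grafting T_1,…,T_n, in this order, on a new root colored x). -/
open TensorProduct

/-- An `X`-colored planar rooted tree: a color in `X` together with a finite ordered list of
planar subtrees. -/
inductive PTree (X : Type*) : Type _ where
  | node : X → List (PTree X) → PTree X

/-!
Braces are computed in the algebra `W = k[FreeMonoid (PTree X)]` of words of trees. With the
deconcatenation convolution `(F ⋆ G)(A) = Σ_{A = A' ++ A''} F A' * G A''` of `W`-valued functions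
of lists, and `λ(A)` the list `A` read as a word, the brace of `T = node x [T₁, …, Tₙ]` is the
root `x` grafted onto `(λ ⋆ T₁{-} ⋆ λ ⋆ ⋯ ⋆ Tₙ{-} ⋆ λ)(A) = Σ A₁ · T₁{A₂} ⋯ Tₙ{A₂ₙ} · A₂ₙ₊₁`,
recursively in `T`. Extending braces to words letter by letter in the same way, the brace
identity for `T` becomes the associativity `(L{Ys}){A} = L{Ys{A}}` for the word `L = T₁ ⋯ Tₙ`.
It follows by induction on `n` from the brace identity for the `Tᵢ`, because inserting into a
list is compatible with deconcatenation. For uniqueness, multilinearity reduces a brace structure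
to braces of trees with trees, and the brace identity for `node x Ts = •_x{Ts}` expresses these
through braces of `•_x` and of the subtrees.
-/

namespace List

variable {ι κ α M : Type*} [AddCommMonoid M]

theorem sum_map_sum_map (l : List ι) (m : List κ) (f : ι → κ → M) :
    (l.map fun i => (m.map (f i)).sum).sum = (m.map fun j => (l.map (f · j)).sum).sum := by
  simpa using Multiset.sum_map_sum_map (l : Multiset ι) (m : Multiset κ) (f := f)

theorem sum_map_flatMap (l : List ι) (g : ι → List κ) (f : κ → M) :
    ((l.flatMap g).map f).sum = (l.map fun i => ((g i).map f).sum).sum := by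
  induction l with
  | nil => rfl
  | cons i l ih => simp [ih]

def splits : List α → List (List α × List α)
  | [] => [([], [])]
  | a :: l => ([], a :: l) :: (splits l).map fun p => (a :: p.1, p.2)

@[simp] theorem splits_nil : ([] : List α).splits = [([], [])] := rfl

theorem splits_eq_map_range (l : List α) :
    l.splits = (range (l.length + 1)).map fun i => (l.take i, l.drop i) := by
  induction l with
  | nil => rfl
  | cons a l ih => simp [splits, ih, range_succ_eq_map, Function.comp_def]

theorem sum_map_splits_cons (a : α) (l : List α) (F : List α × List α → M) :
    ((a :: l).splits.map F).sum =
      F ([], a :: l) + (l.splits.map fun p => F (a :: p.1, p.2)).sum := by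
  simp [splits, Function.comp_def]

theorem sum_map_splits_append_cons (l : List α) (e : α) (r : List α)
    (F : List α → List α → M) :
    ((l ++ e :: r).splits.map fun p => F p.1 p.2).sum =
      (l.splits.map fun p => F p.1 (p.2 ++ e :: r)).sum +
        (r.splits.map fun p => F (l ++ e :: p.1) p.2).sum := by
  induction l generalizing F with
  | nil => simp [sum_map_splits_cons]
  | cons a l ih =>
    simp only [cons_append, sum_map_splits_cons, ih fun u v => F (a :: u) v]
    abel

theorem sum_map_splits_assoc (l : List α) (G : List α → List α → List α → M) :
    (l.splits.map fun p => (p.2.splits.map fun q => G p.1 q.1 q.2).sum).sum =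
      (l.splits.map fun p => (p.1.splits.map fun q => G q.1 q.2 p.2).sum).sum := by
  induction l generalizing G with
  | nil => simp
  | cons a l ih =>
    simp only [sum_map_splits_cons, splits_nil, map_cons, map_nil, sum_cons, sum_nil, add_zero,
      sum_map_add, ih fun u v w => G (a :: u) v w]
    abel

theorem sum_map_splits_assoc₄ (l : List α) (G : List α → List α → List α → List α → M) :
    (l.splits.map fun p => (p.2.splits.map fun q => (q.2.splits.map fun r =>
      G p.1 q.1 r.1 r.2).sum).sum).sum =
      (l.splits.map fun p => (p.1.splits.map fun q => (q.2.splits.map fun r =>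
        G q.1 r.1 r.2 p.2).sum).sum).sum := by
  have inner (p : List α × List α) := sum_map_splits_assoc p.2 (G p.1)
  simp only [inner]
  exact sum_map_splits_assoc l fun a m z => (m.splits.map fun q => G a q.1 q.2 z).sum

end List

open List hiding interleave

section Cuts

variable {α M : Type*} [AddCommMonoid M]

theorem cuts_succ (j : ℕ) (A : List α) :
    cuts (j + 1) A = A.splits.flatMap fun p => (cuts j p.2).map (p.1 :: ·) := by
  rw [splits_eq_map_range, flatMap_map]
  rfl

theorem sum_map_cuts_succ (j : ℕ) (A : List α) (f : List (List α) → M) :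
    ((cuts (j + 1) A).map f).sum =
      (A.splits.map fun p => ((cuts j p.2).map fun P => f (p.1 :: P)).sum).sum := by
  simp [cuts_succ, sum_map_flatMap, Function.comp_def]

theorem cuts_one (A : List α) : cuts 1 A = [[A]] := by
  have hdrop : ∀ i ∈ range A.length, cuts 0 (A.drop i) = [] := fun i hi => by
    simp [cuts, List.mem_range.1 hi]
  rw [cuts, range_succ, flatMap_append, flatMap_eq_nil_iff.2 fun i hi => by simp [hdrop i hi]]
  simp [cuts]

end Cuts

theorem interleave_congr {V : Type*} {f g : V → List V → V} {Ys : List V}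
    (h : ∀ Y ∈ Ys, f Y = g Y) (P : List (List V)) : interleave f Ys P = interleave g Ys P := by
  induction Ys generalizing P with
  | nil => rfl
  | cons Y Ys ih =>
    rcases P with _ | ⟨A₁, _ | ⟨A₂, P⟩⟩
    · rfl
    · rfl
    · simp only [interleave, h Y List.mem_cons_self,
        ih (fun Y' hY' => h Y' (List.mem_cons_of_mem Y hY')) P]

section SplitConv

variable {α W : Type*} [Semiring W]

def splitConv (F G : List α → W) (A : List α) : W :=
  (A.splits.map fun p => F p.1 * G p.2).sum

infixr:70 " ⋆ " => splitConv

theorem splitConv_assoc (F G H : List α → W) : (F ⋆ G) ⋆ H = F ⋆ G ⋆ H := by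
  funext A
  simp only [splitConv, ← sum_map_mul_right, ← sum_map_mul_left, mul_assoc]
  exact (sum_map_splits_assoc A fun a b c => F a * (G b * H c)).symm

theorem splitConv_sum_right {ι : Type*} (F : List α → W) (l : List ι) (G : ι → List α → W) :
    (F ⋆ fun A => (l.map fun i => G i A).sum) = fun A => (l.map fun i => (F ⋆ G i) A).sum := by
  funext A
  simp only [splitConv, ← sum_map_mul_left]
  exact sum_map_sum_map _ _ _

theorem splitConv_apply_append_cons (F G : List α → W) (C : List α) (e : α) (D : List α) :
    (F ⋆ G) (C ++ e :: D) =
      (C.splits.map fun p => F p.1 * G (p.2 ++ e :: D)).sum +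
        ((fun L => F (C ++ e :: L)) ⋆ G) D :=
  sum_map_splits_append_cons C e D fun u v => F u * G v

theorem splitConv_add_left (F F' G : List α → W) :
    (fun A => F A + F' A) ⋆ G = F ⋆ G + F' ⋆ G := by
  funext A
  simp [splitConv, add_mul, sum_map_add]

theorem splitConv_add_right (F G G' : List α → W) : F ⋆ (G + G') = F ⋆ G + F ⋆ G' := by
  funext A
  simp [splitConv, mul_add, sum_map_add]

theorem splitConv_zero_left (G : List α → W) : (fun _ => 0) ⋆ G = 0 := by
  funext A
  simp [splitConv]

theorem splitConv_zero_right (F : List α → W) : F ⋆ 0 = 0 := by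
  funext A
  simp [splitConv]

variable {k : Type*} [CommSemiring k] [Algebra k W]

theorem splitConv_smul_left (c : k) (F G : List α → W) :
    (fun A => c • F A) ⋆ G = c • (F ⋆ G) := by
  funext A
  simp [splitConv, List.smul_sum, Function.comp_def]

theorem splitConv_smul_right (c : k) (F G : List α → W) : F ⋆ (c • G) = c • (F ⋆ G) := by
  funext A
  simp [splitConv, List.smul_sum, Function.comp_def]

end SplitConv

section SpliceSum

variable {V M N : Type*} [AddCommMonoid M] [AddCommMonoid N] (br : V → List V → V)

def spliceSum (F : List V → M) (Ys A : List V) : M :=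
  ((cuts (2 * Ys.length + 1) A).map fun P => F (interleave br Ys P)).sum

@[simp] theorem spliceSum_nil (F : List V → M) (A : List V) : spliceSum br F [] A = F A := by
  simp [spliceSum, cuts_one, interleave]

theorem spliceSum_cons (F : List V → M) (Y : V) (Ys A : List V) :
    spliceSum br F (Y :: Ys) A =
      (A.splits.map fun p => (p.2.splits.map fun q =>
        spliceSum br (fun L => F (p.1 ++ br Y q.1 :: L)) Ys q.2).sum).sum := by
  rw [spliceSum, length_cons,
    show 2 * (Ys.length + 1) + 1 = 2 * Ys.length + 1 + 1 + 1 by ring, sum_map_cuts_succ]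
  simp only [sum_map_cuts_succ (2 * Ys.length + 1)]
  rfl

theorem spliceSum_add (F G : List V → M) (Ys A : List V) :
    spliceSum br (fun L => F L + G L) Ys A = spliceSum br F Ys A + spliceSum br G Ys A :=
  sum_map_add

theorem spliceSum_sum {ι : Type*} (l : List ι) (F : ι → List V → M) (Ys A : List V) :
    spliceSum br (fun L => (l.map fun i => F i L).sum) Ys A =
      (l.map fun i => spliceSum br (F i) Ys A).sum :=
  sum_map_sum_map _ _ _

theorem spliceSum_map {G : Type*} [FunLike G M N] [AddMonoidHomClass G M N] (φ : G)
    (F : List V → M) (Ys A : List V) :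
    spliceSum br (fun L => φ (F L)) Ys A = φ (spliceSum br F Ys A) := by
  simp [spliceSum, map_list_sum, Function.comp_def]

variable {W : Type*} [Semiring W]

theorem spliceSum_mul_left (c : W) (F : List V → W) (Ys A : List V) :
    spliceSum br (fun L => c * F L) Ys A = c * spliceSum br F Ys A :=
  spliceSum_map br (AddMonoidHom.mulLeft c) F Ys A

theorem spliceSum_splitConv_right (F : List V → W) (H : List V → List V → W) (Ys A B : List V) :
    spliceSum br (fun L => (F ⋆ H L) A) Ys B = (F ⋆ fun A' => spliceSum br (H · A') Ys B) A := by
  simp only [splitConv, spliceSum_sum, spliceSum_mul_left]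

theorem spliceSum_splitConv (F G : List V → W) (Ys A : List V) :
    spliceSum br (F ⋆ G) Ys A =
      (Ys.splits.map fun q => (spliceSum br F q.1 ⋆ spliceSum br G q.2) A).sum := by
  induction Ys generalizing F A with
  | nil => simp [funext (spliceSum_nil br _)]
  | cons Y Ys ih =>
    simp only [spliceSum_cons, splitConv_apply_append_cons, spliceSum_add, spliceSum_sum,
      spliceSum_mul_left, ih, sum_map_add, sum_map_splits_cons]
    congr 1
    · rw [funext (spliceSum_nil br F), splitConv]
      simp only [spliceSum_cons, ← sum_map_mul_left]
      simp only [sum_map_sum_map (_ : List V × List V).2.splits (_ : List V × List V).1.splits]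
      exact (sum_map_splits_assoc A fun a b r => (r.splits.map fun q =>
        F a * spliceSum br (fun L => G (b ++ br Y q.1 :: L)) Ys q.2).sum).symm
    · simp only [sum_map_sum_map (_ : List V × List V).2.splits Ys.splits]
      rw [sum_map_sum_map A.splits Ys.splits]
      refine congrArg List.sum (List.map_congr_left fun r _ => ?_)
      simp only [splitConv, spliceSum_cons, ← sum_map_mul_right]
      exact sum_map_splits_assoc₄ A fun a b c d =>
        spliceSum br (fun L => F (a ++ br Y b :: L)) r.1 c * spliceSum br G r.2 d

end SpliceSum

def wordProd {V W : Type*} [Monoid W] (ι : V → W) (A : List V) : W := (A.map ι).prod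

theorem wordProd_append_cons {V W : Type*} [Monoid W] (ι : V → W) (C : List V) (e : V)
    (D : List V) : wordProd ι (C ++ e :: D) = wordProd ι C * (ι e * wordProd ι D) := by
  simp [wordProd]

section BraceProd

variable {V W : Type*} [Semiring W]

/-- `braceProd ι [f₁, …, fₙ] = λ ⋆ ι ∘ f₁ ⋆ λ ⋆ ⋯ ⋆ ι ∘ fₙ ⋆ λ` with `λ = wordProd ι`;
for `fᵢ = br Yᵢ` it is `spliceSum br (wordProd ι) [Y₁, …, Yₙ]` (`spliceSum_wordProd`). -/
def braceProd (ι : V → W) : List (List V → V) → List V → W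
  | [] => wordProd ι
  | f :: fs => wordProd ι ⋆ (fun A => ι (f A)) ⋆ braceProd ι fs

theorem braceProd_append_cons (ι : V → W) (fs : List (List V → V)) (f : List V → V)
    (gs : List (List V → V)) :
    braceProd ι (fs ++ f :: gs) = braceProd ι fs ⋆ (fun A => ι (f A)) ⋆ braceProd ι gs := by
  induction fs with
  | nil => rfl
  | cons h fs ih => simp only [List.cons_append, braceProd, ih, splitConv_assoc]

theorem braceProd_apply_nil (ι : V → W) (fs : List (List V → V)) :
    braceProd ι fs [] = (fs.map fun f => ι (f [])).prod := by
  induction fs with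
  | nil => simp [braceProd, wordProd]
  | cons f fs ih => simp [braceProd, splitConv, wordProd, ih]

variable (br : V → List V → V)

theorem spliceSum_wordProd (ι : V → W) (Ys : List V) :
    spliceSum br (wordProd ι) Ys = braceProd ι (Ys.map br) := by
  induction Ys with
  | nil => funext A; simp [braceProd]
  | cons Y Ys ih =>
    funext A
    simp only [spliceSum_cons, wordProd_append_cons, spliceSum_mul_left, ih, List.map_cons,
      braceProd, splitConv, ← sum_map_mul_left]

/-- The brace identity at the level of words: for the words `L{Ys}` and `Ys{A}`,
`(L{Ys}){A} = L{Ys{A}}`, given the brace identity for the letters of `L`. -/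
theorem spliceSum_braceProd [AddCommMonoid V] {G : Type*} [FunLike G V W]
    [AddMonoidHomClass G V W] (ι : G) (L : List V)
    (hL : ∀ Y ∈ L, ∀ Ys A, br (br Y Ys) A = spliceSum br (br Y) Ys A) (Ys A : List V) :
    spliceSum br (fun L' => braceProd ι (L'.map br) A) L Ys =
      spliceSum br (braceProd ι (L.map br)) Ys A := by
  induction L generalizing Ys A with
  | nil => simp [braceProd, spliceSum_wordProd]
  | cons T L ih =>
    have hT (B : List V) :
        spliceSum br (fun A => ι (br T A)) B = fun A => ι (br (br T B) A) := by
      funext A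
      rw [spliceSum_map, hL T List.mem_cons_self]
    have hsplit (F G : List V → W) (B : List V) :
        spliceSum br (F ⋆ G) B = fun A =>
          (B.splits.map fun q => (spliceSum br F q.1 ⋆ spliceSum br G q.2) A).sum :=
      funext (spliceSum_splitConv br F G B)
    rw [spliceSum_cons]
    simp only [List.map_append, List.map_cons, braceProd_append_cons, spliceSum_splitConv_right,
      ih fun Y hY => hL Y (List.mem_cons_of_mem T hY)]
    rw [braceProd, spliceSum_splitConv]
    simp only [spliceSum_wordProd, hsplit, splitConv_sum_right, hT]

end BraceProd

section ListMultilinear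

variable (k : Type*) {V M N : Type*} [Semiring k] [AddCommMonoid V] [Module k V]
  [AddCommMonoid M] [Module k M] [AddCommMonoid N] [Module k N]

def IsListMultilinear (F : List V → M) : Prop :=
  ∀ C D : List V, IsLinearMap k fun v => F (C ++ v :: D)

variable {k}

theorem IsListMultilinear.comp {F : List V → M} (hF : IsListMultilinear k F) (f : M →ₗ[k] N) :
    IsListMultilinear k fun A => f (F A) := fun C D =>
  ⟨fun v w => by simp [(hF C D).map_add], fun c v => by simp [(hF C D).map_smul]⟩

theorem IsListMultilinear.eq_of_eq_on_single {σ : Type*} {F G : List (σ →₀ k) → M}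
    (hF : IsListMultilinear k F) (hG : IsListMultilinear k G)
    (h : ∀ l : List σ, F (l.map (Finsupp.single · 1)) = G (l.map (Finsupp.single · 1))) :
    F = G := by
  suffices key : ∀ (B : List (σ →₀ k)) (l : List σ),
      F (l.map (Finsupp.single · 1) ++ B) = G (l.map (Finsupp.single · 1) ++ B) from
    funext fun B => by simpa using key B []
  intro B
  induction B with
  | nil => simpa using h
  | cons v B ih =>
    intro l
    have hlin := Finsupp.lhom_ext (φ := (hF _ B).mk') (ψ := (hG _ B).mk') fun i c => by
      have hi := ih (l ++ [i])
      simp only [List.map_append, List.map_cons, List.map_nil, List.append_assoc,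
        List.singleton_append] at hi
      rw [IsLinearMap.mk'_apply, IsLinearMap.mk'_apply, ← Finsupp.smul_single_one i c,
        (hF _ B).map_smul, (hG _ B).map_smul, hi]
    exact LinearMap.congr_fun hlin v

end ListMultilinear

section ListMultilinearAlgebra

variable {k V W : Type*} [CommSemiring k] [AddCommMonoid V] [Module k V] [Semiring W]
  [Algebra k W]

theorem isListMultilinear_wordProd (ι : V →ₗ[k] W) : IsListMultilinear k (wordProd ι) :=
  fun C D => ⟨fun v w => by simp [wordProd_append_cons, add_mul, mul_add],
    fun c v => by simp [wordProd_append_cons]⟩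

theorem IsListMultilinear.splitConv {F G : List V → W} (hF : IsListMultilinear k F)
    (hG : IsListMultilinear k G) : IsListMultilinear k (F ⋆ G) := fun C D => by
  have expand (v : V) : (F ⋆ G) (C ++ v :: D) =
      (C.splits.map fun p => F p.1 * G (p.2 ++ v :: D)).sum +
        (D.splits.map fun p => F (C ++ v :: p.1) * G p.2).sum :=
    sum_map_splits_append_cons C v D fun u w => F u * G w
  refine ⟨fun v w => ?_, fun c v => ?_⟩
  · simp only [expand, (hF _ _).map_add, (hG _ _).map_add, mul_add, add_mul, sum_map_add]
    abel
  · simp only [expand, (hF _ _).map_smul, (hG _ _).map_smul, mul_smul_comm, smul_mul_assoc,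
      smul_add, List.smul_sum, List.map_map, Function.comp_def]

theorem isListMultilinear_braceProd (ι : V →ₗ[k] W) (fs : List (List V → V))
    (hfs : ∀ f ∈ fs, IsListMultilinear k f) : IsListMultilinear k (braceProd ι fs) := by
  induction fs with
  | nil => exact isListMultilinear_wordProd ι
  | cons f fs ih =>
    exact (isListMultilinear_wordProd ι).splitConv (((hfs f List.mem_cons_self).comp ι).splitConv
      (ih fun g hg => hfs g (List.mem_cons_of_mem f hg)))

end ListMultilinearAlgebra

namespace BraceAlg

variable {k V : Type*} [CommRing k] [AddCommGroup V] [Module k V]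

theorem ext_br {b d : BraceAlg k V} (h : b.br = d.br) : b = d := by
  cases b; cases d; cases h; rfl

theorem isListMultilinear_br (b : BraceAlg k V) (X : V) : IsListMultilinear k (b.br X) :=
  fun C D => ⟨fun v w => by simpa using b.br_linear_arg X C D 1 1 v w,
    fun c v => by simpa using b.br_linear_arg X C D c 0 v 0⟩

theorem eq_of_br_single {σ : Type*} {b d : BraceAlg k (σ →₀ k)}
    (h : ∀ i, b.br (Finsupp.single i 1) = d.br (Finsupp.single i 1)) : b = d := by
  refine ext_br (funext fun v => funext fun A => ?_)
  have hlin := Finsupp.lhom_ext (φ := (b.br_linear_left A).mk') (ψ := (d.br_linear_left A).mk')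
    fun i c => by
      rw [IsLinearMap.mk'_apply, IsLinearMap.mk'_apply, ← Finsupp.smul_single_one i c,
        (b.br_linear_left A).map_smul, (d.br_linear_left A).map_smul, h i]
  exact LinearMap.congr_fun hlin v

end BraceAlg

theorem MonoidAlgebra.basis_constr_single {k G M : Type*} [CommSemiring k] [AddCommMonoid M]
    [Module k M] (f : G → M) (g : G) (c : k) :
    (MonoidAlgebra.basis G k).constr k f (MonoidAlgebra.single g c) = c • f g := by
  rw [← mul_one c, ← MonoidAlgebra.smul_single', ← MonoidAlgebra.basis_apply, map_smul,
    Module.Basis.constr_basis, mul_one]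

namespace PTree

variable {k X : Type*}

theorem induction {motive : PTree X → Prop}
    (node : ∀ x Ts, (∀ T ∈ Ts, motive T) → motive (.node x Ts)) : ∀ T, motive T
  | .node x Ts => node x Ts fun T _ => PTree.induction node T

section Construction

variable [CommSemiring k]

variable (k) in
noncomputable def letter : (PTree X →₀ k) →ₗ[k] MonoidAlgebra k (FreeMonoid (PTree X)) :=
  Finsupp.linearCombination k fun T => MonoidAlgebra.single (FreeMonoid.of T) 1

noncomputable def graft (x : X) :
    MonoidAlgebra k (FreeMonoid (PTree X)) →ₗ[k] PTree X →₀ k :=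
  (MonoidAlgebra.basis _ k).constr k fun w => Finsupp.single (node x w.toList) 1

noncomputable def brace : PTree X → List (PTree X →₀ k) → PTree X →₀ k
  | node x Ts, A => graft x (braceProd (letter k) (Ts.map brace) A)

variable (k X) in
noncomputable def braceLin : (PTree X →₀ k) →ₗ[k] List (PTree X →₀ k) → PTree X →₀ k :=
  Finsupp.linearCombination k brace

variable (k X) in
noncomputable def wordBrace :
    MonoidAlgebra k (FreeMonoid (PTree X)) →ₗ[k]
      List (PTree X →₀ k) → MonoidAlgebra k (FreeMonoid (PTree X)) :=
  (MonoidAlgebra.basis _ k).constr k fun w => braceProd (letter k) (w.toList.map brace)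

theorem letter_single (T : PTree X) (c : k) :
    letter k (Finsupp.single T c) = MonoidAlgebra.single (FreeMonoid.of T) c := by
  simp [letter]

theorem graft_single (x : X) (w : FreeMonoid (PTree X)) (c : k) :
    graft x (MonoidAlgebra.single w c) = Finsupp.single (node x w.toList) c := by
  simp [graft, MonoidAlgebra.basis_constr_single]

theorem braceLin_single (T : PTree X) (c : k) :
    braceLin k X (Finsupp.single T c) = c • brace T :=
  Finsupp.linearCombination_single k c T

theorem wordBrace_single (w : FreeMonoid (PTree X)) (c : k) :
    wordBrace k X (MonoidAlgebra.single w c) = c • braceProd (letter k) (w.toList.map brace) :=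
  MonoidAlgebra.basis_constr_single _ w c

theorem map_brace (Ts : List (PTree X)) :
    Ts.map (brace (k := k)) = (Ts.map (Finsupp.single · 1)).map (braceLin k X) := by
  simp [Function.comp_def, braceLin_single]

theorem prod_map_letter_single (Ts : List (PTree X)) :
    (Ts.map fun T => letter k (Finsupp.single T 1)).prod =
      MonoidAlgebra.single (FreeMonoid.ofList Ts) 1 := by
  induction Ts with
  | nil => rfl
  | cons T Ts ih =>
    rw [List.map_cons, List.prod_cons, ih, letter_single, MonoidAlgebra.single_mul_single,
      one_mul, FreeMonoid.ofList_cons]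

theorem brace_nil (T : PTree X) : brace T [] = Finsupp.single T (1 : k) := by
  induction T using PTree.induction with
  | node x Ts ih =>
    rw [brace, braceProd_apply_nil, List.map_map]
    have hsub : Ts.map (fun T => letter k (brace T [])) =
        Ts.map fun T => letter k (Finsupp.single T 1) :=
      List.map_congr_left fun T hT => by rw [ih T hT]
    rw [Function.comp_def, hsub, prod_map_letter_single, graft_single, FreeMonoid.toList_ofList]

theorem braceLin_nil (v : PTree X →₀ k) : braceLin k X v [] = v := by
  induction v using Finsupp.induction_linear with
  | zero => simp
  | add v w hv hw => simp [hv, hw]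
  | single T c => simp [braceLin_single, brace_nil]

theorem brace_leaf (x : X) (Ts : List (PTree X)) :
    brace (node x []) (Ts.map (Finsupp.single · 1)) = Finsupp.single (node x Ts) (1 : k) := by
  rw [brace, List.map_nil, braceProd, wordProd, List.map_map, Function.comp_def,
    prod_map_letter_single, graft_single, FreeMonoid.toList_ofList]

theorem isListMultilinear_brace (T : PTree X) : IsListMultilinear k (brace (k := k) T) := by
  induction T using PTree.induction with
  | node x Ts ih =>
    rw [show brace (node x Ts) = fun A => graft x (braceProd (letter k) (Ts.map brace) A) from
      funext fun A => by rw [brace]]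
    exact (isListMultilinear_braceProd (letter k) (Ts.map brace) (by simpa using ih)).comp
      (graft x)

theorem isListMultilinear_braceLin (v : PTree X →₀ k) :
    IsListMultilinear k (braceLin k X v) := by
  induction v using Finsupp.induction_linear with
  | zero => exact fun C D => ⟨fun _ _ => by simp, fun _ _ => by simp⟩
  | add v w hv hw =>
    exact fun C D => ⟨fun a b => by simp [(hv C D).map_add, (hw C D).map_add]; abel,
      fun c a => by simp [(hv C D).map_smul, (hw C D).map_smul]⟩
  | single T c =>
    rw [braceLin_single]
    exact (isListMultilinear_brace T).comp (c • LinearMap.id : (PTree X →₀ k) →ₗ[k] _)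

theorem braceLin_graft (x : X) (w : MonoidAlgebra k (FreeMonoid (PTree X)))
    (A : List (PTree X →₀ k)) :
    braceLin k X (graft x w) A = graft x (wordBrace k X w A) := by
  induction w using MonoidAlgebra.induction_linear with
  | zero => simp
  | add w w' hw hw' => simp [hw, hw']
  | single u c => simp [graft_single, braceLin_single, wordBrace_single, brace]

theorem wordBrace_letter_mul (v : PTree X →₀ k) (w : MonoidAlgebra k (FreeMonoid (PTree X))) :
    wordBrace k X (letter k v * w) =
      wordProd (letter k) ⋆ (fun A => letter k (braceLin k X v A)) ⋆ wordBrace k X w := by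
  induction v using Finsupp.induction_linear with
  | zero => simp [splitConv_zero_left, splitConv_zero_right]
  | add v v' hv hv' => simp [add_mul, hv, hv', splitConv_add_left, splitConv_add_right]
  | single T c =>
    induction w using MonoidAlgebra.induction_linear with
    | zero => simp [splitConv_zero_right]
    | add w w' hw hw' => simp [mul_add, hw, hw', splitConv_add_right]
    | single u d =>
      simp [letter_single, MonoidAlgebra.single_mul_single, wordBrace_single, braceLin_single,
        braceProd, splitConv_smul_left, splitConv_smul_right, smul_smul, mul_comm]

theorem wordBrace_wordProd (L : List (PTree X →₀ k)) :
    wordBrace k X (wordProd (letter k) L) = braceProd (letter k) (L.map (braceLin k X)) := by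
  induction L with
  | nil =>
    rw [wordProd, List.map_nil, List.prod_nil, MonoidAlgebra.one_def, wordBrace_single]
    simp [braceProd]
  | cons v L ih =>
    rw [wordProd, List.map_cons, List.prod_cons, ← wordProd, wordBrace_letter_mul, ih]
    rfl

theorem brace_brace (T : PTree X) (Ys A : List (PTree X →₀ k)) :
    braceLin k X (brace T Ys) A = spliceSum (braceLin k X) (brace T) Ys A := by
  induction T using PTree.induction generalizing Ys A with
  | node x Ts ih =>
    set L := Ts.map (Finsupp.single · (1 : k))
    have hTs : Ts.map brace = L.map (braceLin k X) := map_brace Ts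
    have hL : ∀ Y ∈ L, ∀ Ys A, braceLin k X (braceLin k X Y Ys) A =
        spliceSum (braceLin k X) (braceLin k X Y) Ys A := by
      simp only [L, List.mem_map]
      rintro _ ⟨T, hT, rfl⟩
      simpa [braceLin_single] using ih T hT
    calc braceLin k X (brace (node x Ts) Ys) A
        = graft x (wordBrace k X (spliceSum (braceLin k X) (wordProd (letter k)) L Ys) A) := by
          rw [brace, braceLin_graft, hTs, spliceSum_wordProd]
      _ = graft x (spliceSum (braceLin k X)
            (fun L' => braceProd (letter k) (L'.map (braceLin k X)) A) L Ys) := by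
          have h := spliceSum_map (braceLin k X) ((LinearMap.proj A).comp (wordBrace k X))
            (wordProd (letter k)) L Ys
          simp only [LinearMap.comp_apply, LinearMap.proj_apply, wordBrace_wordProd] at h
          rw [h]
      _ = graft x (spliceSum (braceLin k X)
            (braceProd (letter k) (L.map (braceLin k X))) Ys A) := by
          rw [spliceSum_braceProd _ _ L hL]
      _ = spliceSum (braceLin k X) (brace (node x Ts)) Ys A := by
          rw [← spliceSum_map]
          congr 1
          funext A'
          rw [brace, hTs]

theorem braceLin_braceLin (v : PTree X →₀ k) (Ys A : List (PTree X →₀ k)) :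
    braceLin k X (braceLin k X v Ys) A = spliceSum (braceLin k X) (braceLin k X v) Ys A := by
  induction v using Finsupp.induction_linear with
  | zero => simp [spliceSum]
  | add v w hv hw =>
    simp only [map_add, Pi.add_apply, hv, hw]
    exact (spliceSum_add _ _ _ _ _).symm
  | single T c =>
    simp only [braceLin_single, Pi.smul_apply, map_smul, brace_brace]
    exact (spliceSum_map _ (DistribSMul.toAddMonoidHom _ c) _ _ _).symm

end Construction

variable [CommRing k]

variable (k X) in
noncomputable def braceAlg : BraceAlg k (PTree X →₀ k) where
  br v A := braceLin k X v A
  br_nil := braceLin_nil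
  br_linear_left A := ⟨fun v w => by simp, fun c v => by simp⟩
  br_linear_arg v C D a b Y Z := by
    simp [(isListMultilinear_braceLin v C D).map_add, (isListMultilinear_braceLin v C D).map_smul]
  br_identity := braceLin_braceLin

theorem braceAlg_br_leaf (x : X) (Ts : List (PTree X)) :
    (braceAlg k X).br (Finsupp.single (node x []) 1) (Ts.map fun T => Finsupp.single T 1) =
      Finsupp.single (node x Ts) 1 := by
  simp only [braceAlg, braceLin_single, one_smul]
  exact brace_leaf x Ts

theorem eq_of_br_leaf {b d : BraceAlg k (PTree X →₀ k)}
    (hb : ∀ x Ts, b.br (Finsupp.single (node x []) 1) (Ts.map fun T => Finsupp.single T 1) =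
      Finsupp.single (node x Ts) 1)
    (hd : ∀ x Ts, d.br (Finsupp.single (node x []) 1) (Ts.map fun T => Finsupp.single T 1) =
      Finsupp.single (node x Ts) 1) : b = d := by
  have hleaf (x : X) :
      b.br (Finsupp.single (node x []) 1) = d.br (Finsupp.single (node x []) 1) :=
    (b.isListMultilinear_br _).eq_of_eq_on_single (d.isListMultilinear_br _) fun Ts =>
      (hb x Ts).trans (hd x Ts).symm
  refine BraceAlg.eq_of_br_single fun T => ?_
  induction T using PTree.induction with
  | node x Ts ih =>
    funext A
    have hsub : ∀ Y ∈ Ts.map (Finsupp.single · 1), b.br Y = d.br Y := by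
      simp only [List.mem_map]
      rintro _ ⟨T, hT, rfl⟩
      exact ih T hT
    calc b.br (Finsupp.single (node x Ts) 1) A
        = b.br (b.br (Finsupp.single (node x []) 1) (Ts.map (Finsupp.single · 1))) A := by
          rw [hb]
      _ = d.br (d.br (Finsupp.single (node x []) 1) (Ts.map (Finsupp.single · 1))) A := by
          rw [b.br_identity, d.br_identity, hleaf x]
          simp only [interleave_congr hsub]
      _ = d.br (Finsupp.single (node x Ts) 1) A := by rw [hd]

end PTree

/-- Let `k` be a commutative ring and `X` a type.  There is a unique brace
algebra structure on `BR(X)`, the free `k`-module on the set of `X`-colored planar rooted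
trees, such that for every `x ∈ X` and all trees `T_1, …, T_n`:
`•_x{T_1, …, T_n} = node x [T_1, …, T_n]` (grafting `T_1, …, T_n`, in this order, on a new
root colored `x`). -/
theorem planar_trees_free_brace
    (k X : Type*) [CommRing k] :
    ∃! b : BraceAlg k (PTree X →₀ k),
      ∀ (x : X) (Ts : List (PTree X)),
        b.br (Finsupp.single (PTree.node x []) 1)
            (Ts.map fun T => Finsupp.single T (1 : k)) =
          Finsupp.single (PTree.node x Ts) 1 :=
  ⟨PTree.braceAlg k X, PTree.braceAlg_br_leaf, fun _ hb =>
    PTree.eq_of_br_leaf hb PTree.braceAlg_br_leaf⟩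
end
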